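/- arXiv:2601.19333 — 12 statements merged into one kernel-verified Lean document; each statement's English description precedes it below -/
import Mathlib

section
/- For every real ζ ≥ 1, the function d_ζ on the lower-bound vertex set V is a pseudometric: d_ζ(a,a) = 0 for all a, d_ζ is symmetric, and d_ζ(a,c) ≤ d_ζ(a,b) + d_ζ(b,c) for all a, b, c ∈ V. -/
/-- The lower-bound vertex set: `U` has `k-1` vertices, `Y` has `n'` vertices,
and the groups `X_2, …, X_k` are `k-1` groups of `n'-1` vertices each. -/
abbrev LBV (k n' : ℕ) : Type := Fin (k - 1) ⊕ (Fin n' ⊕ (Fin (k - 1) × Fin (n' - 1)))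

/-- The distance function `d_ζ` on the lower-bound vertex set: `d_ζ(a,a) = 0`;
`d_ζ(a,b) = ζ` if `a ≠ b` and at least one of `a, b` belongs to `U`;
`d_ζ(a,b) = 0` if `a ≠ b` lie in the same group; `d_ζ(a,b) = 1` if `a, b` lie
in two different groups. -/
noncomputable def dLB (k n' : ℕ) (ζ : ℝ) (a b : LBV k n') : ℝ :=
  if a = b then 0
  else
    match a, b with
    | Sum.inl _, _ => ζ
    | _, Sum.inl _ => ζ
    | Sum.inr (Sum.inl _), Sum.inr (Sum.inl _) => 0
    | Sum.inr (Sum.inr p), Sum.inr (Sum.inr q) => if p.1 = q.1 then 0 else 1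
    | Sum.inr (Sum.inl _), Sum.inr (Sum.inr _) => 1
    | Sum.inr (Sum.inr _), Sum.inr (Sum.inl _) => 1

/-- For every real `ζ ≥ 1`, the function `d_ζ` on the lower-bound vertex set
is a pseudometric: it vanishes on the diagonal, is symmetric, and satisfies
the triangle inequality. -/
theorem stmt0 (n k : ℕ) (hk : 2 ≤ k) (hdvd : k ∣ n) (hnk : 3 ≤ n / k)
    (ζ : ℝ) (hζ : 1 ≤ ζ) :
    (∀ a : LBV k (n / k), dLB k (n / k) ζ a a = 0) ∧
    (∀ a b : LBV k (n / k), dLB k (n / k) ζ a b = dLB k (n / k) ζ b a) ∧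
    (∀ a b c : LBV k (n / k),
      dLB k (n / k) ζ a c ≤ dLB k (n / k) ζ a b + dLB k (n / k) ζ b c) := by
  refine ⟨fun a => by simp [dLB], fun a b => ?_, fun a b c => ?_⟩
  · rcases a with a | a | a <;> rcases b with b | b | b <;>
      simp [dLB] <;> (try split_ifs) <;> simp_all
  · rcases a with a | a | a <;> rcases b with b | b | b <;> rcases c with c | c | c <;>
      simp [dLB] <;> (try split_ifs) <;> (try simp_all) <;> linarith
end

section
/- With ζ = n³, the optimal k-median cost of the lower-bound instance equals (k−1)(n/k − 1); it is attained by the set U ∪ {y} for any y ∈ Y, every other subset R ⊆ V with |R| = k has COST_{n³}(R) ≥ (k−1)(n/k − 1), and in particular opt_{n³}(k) ≤ n. -/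
/-- The `k`-median cost of a set of centers `R`:
`COST_ζ(R) = Σ_{v ∈ V} min_{r ∈ R} d_ζ(v, r)`. -/
noncomputable def costLB (k n' : ℕ) (ζ : ℝ) (R : Finset (LBV k n')) : ℝ :=
  ∑ v : LBV k n', sInf ((fun r => dLB k n' ζ v r) '' ↑R)

/-- `opt_ζ(kk) = min { COST_ζ(R) : R ⊆ V, |R| = kk }`. -/
noncomputable def optLB (k n' : ℕ) (ζ : ℝ) (kk : ℕ) : ℝ :=
  sInf {c : ℝ | ∃ R : Finset (LBV k n'), R.card = kk ∧ c = costLB k n' ζ R}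

lemma sum_ite_fst_eq_zero_one (a b : ℕ) (c : Fin a) :
    ∑ p : Fin a × Fin b, (if p.1 = c then 0 else 1 : ℝ) = ((a - 1) * b : ℕ) := by
  rw [Finset.sum_ite, Finset.sum_const_zero, zero_add, Finset.sum_const, nsmul_one,
    ← Finset.univ_product_univ, Finset.filter_product_left (fun i => ¬i = c),
    Finset.card_product, Finset.filter_ne', Finset.card_erase_of_mem (Finset.mem_univ _)]
  simp

section

variable {k n' : ℕ} {ζ : ℝ}

@[simp] lemma dLB_self (a : LBV k n') : dLB k n' ζ a a = 0 := by simp [dLB]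

lemma dLB_inl_of_ne {i : Fin (k - 1)} {b : LBV k n'} (h : Sum.inl i ≠ b) :
    dLB k n' ζ (Sum.inl i) b = ζ := by
  rw [dLB, if_neg h]

@[simp] lemma dLB_inr_inl (a : Fin n' ⊕ (Fin (k - 1) × Fin (n' - 1))) (i : Fin (k - 1)) :
    dLB k n' ζ (Sum.inr a) (Sum.inl i) = ζ := by
  rw [dLB, if_neg Sum.inr_ne_inl]
  rcases a with _ | _ <;> simp

@[simp] lemma dLB_Y_Y (j j' : Fin n') :
    dLB k n' ζ (Sum.inr (Sum.inl j)) (Sum.inr (Sum.inl j')) = 0 := by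
  unfold dLB; split_ifs <;> rfl

@[simp] lemma dLB_X_Y (p : Fin (k - 1) × Fin (n' - 1)) (j : Fin n') :
    dLB k n' ζ (Sum.inr (Sum.inr p)) (Sum.inr (Sum.inl j)) = 1 := by
  rw [dLB, if_neg (by simp)]

@[simp] lemma dLB_Y_X (j : Fin n') (p : Fin (k - 1) × Fin (n' - 1)) :
    dLB k n' ζ (Sum.inr (Sum.inl j)) (Sum.inr (Sum.inr p)) = 1 := by
  rw [dLB, if_neg (by simp)]

@[simp] lemma dLB_X_X (p q : Fin (k - 1) × Fin (n' - 1)) :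
    dLB k n' ζ (Sum.inr (Sum.inr p)) (Sum.inr (Sum.inr q)) = if p.1 = q.1 then 0 else 1 := by
  unfold dLB
  split_ifs <;> simp_all

lemma dLB_nonneg (hζ : 0 ≤ ζ) (a b : LBV k n') : 0 ≤ dLB k n' ζ a b := by
  rcases a with i | j | p
  · by_cases h : Sum.inl i = b
    · simp [← h]
    · rw [dLB_inl_of_ne h]; exact hζ
  all_goals
    rcases b with i | j' | q <;> simp only [dLB_inr_inl, dLB_Y_Y, dLB_X_Y, dLB_Y_X, dLB_X_X]
  all_goals first | exact hζ | positivity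

lemma costLB_nonneg (hζ : 0 ≤ ζ) (R : Finset (LBV k n')) : 0 ≤ costLB k n' ζ R :=
  Finset.sum_nonneg fun v _ => Real.sInf_nonneg <| by
    rintro _ ⟨r, -, rfl⟩
    exact dLB_nonneg hζ v r

lemma costLB_le_sum {R : Finset (LBV k n')} (f : LBV k n' → LBV k n') (hf : ∀ v, f v ∈ R) :
    costLB k n' ζ R ≤ ∑ v, dLB k n' ζ v (f v) :=
  Finset.sum_le_sum fun v _ =>
    csInf_le (R.finite_toSet.image _).bddBelow ⟨f v, hf v, rfl⟩

lemma sum_le_costLB {R : Finset (LBV k n')} (hR : R.Nonempty) (g : LBV k n' → ℝ)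
    (hg : ∀ v, ∀ r ∈ R, g v ≤ dLB k n' ζ v r) : ∑ v, g v ≤ costLB k n' ζ R :=
  Finset.sum_le_sum fun v _ => le_csInf ((Finset.coe_nonempty.mpr hR).image _) <| by
    rintro _ ⟨r, hr, rfl⟩
    exact hg v r hr

def uCenters (k n' : ℕ) : Finset (LBV k n') := Finset.univ.image Sum.inl

lemma forall_mem_insert_uCenters {w : LBV k n'} {P : LBV k n' → Prop} :
    (∀ r ∈ insert w (uCenters k n'), P r) ↔ P w ∧ ∀ i, P (Sum.inl i) := by
  simp [uCenters]

lemma costLB_insert_Y_le (j : Fin n') :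
    costLB k n' ζ (insert (Sum.inr (Sum.inl j)) (uCenters k n'))
      ≤ (((k - 1) * (n' - 1) : ℕ) : ℝ) := by
  refine (costLB_le_sum (Sum.elim Sum.inl fun _ => Sum.inr (Sum.inl j)) ?_).trans_eq ?_
  · rintro (i | a)
    · exact Finset.mem_insert_of_mem (Finset.mem_image_of_mem _ (Finset.mem_univ i))
    · exact Finset.mem_insert_self _ _
  · simp [Fintype.sum_sum_type]

lemma le_costLB_insert_Y (hζ : 1 ≤ ζ) (j : Fin n') :
    (((k - 1) * (n' - 1) : ℕ) : ℝ)
      ≤ costLB k n' ζ (insert (Sum.inr (Sum.inl j)) (uCenters k n')) := by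
  refine le_of_eq_of_le ?_ (sum_le_costLB (Finset.insert_nonempty _ _)
    (Sum.elim 0 (Sum.elim 0 1)) ?_)
  · simp [Fintype.sum_sum_type]
  · rintro (_ | _ | p)
    iterate 2 exact fun r _ => dLB_nonneg (zero_le_one.trans hζ) _ r
    rw [forall_mem_insert_uCenters]
    simp [hζ]

lemma le_costLB_insert_X (hζ : 1 ≤ ζ) (q : Fin (k - 1) × Fin (n' - 1)) :
    (((k - 1) * (n' - 1) : ℕ) : ℝ)
      ≤ costLB k n' ζ (insert (Sum.inr (Sum.inr q)) (uCenters k n')) := by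
  refine le_trans ?_ (sum_le_costLB (Finset.insert_nonempty _ _)
    (Sum.elim 0 (Sum.elim 1 fun p => if p.1 = q.1 then 0 else 1)) ?_)
  · obtain ⟨a, ha⟩ : ∃ a, k - 1 = a + 1 := ⟨k - 2, by have := q.1.pos; omega⟩
    have hcount : (a + 1) * (n' - 1) ≤ n' + a * (n' - 1) := by
      rw [add_one_mul, add_comm]
      exact Nat.add_le_add_right (Nat.sub_le n' 1) _
    simpa [Fintype.sum_sum_type, sum_ite_fst_eq_zero_one, ha] using (by exact_mod_cast hcount :
      (((a + 1) * (n' - 1) : ℕ) : ℝ) ≤ ((n' + a * (n' - 1) : ℕ) : ℝ))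
  · rintro (_ | _ | _)
    · exact fun r _ => dLB_nonneg (zero_le_one.trans hζ) _ r
    · rw [forall_mem_insert_uCenters]
      simp [hζ]
    · rw [forall_mem_insert_uCenters]
      refine ⟨by simp, fun i => ?_⟩
      rw [Sum.elim_inr, Sum.elim_inr, dLB_inr_inl]
      split_ifs <;> linarith

lemma costLB_insert_Y (hζ : 1 ≤ ζ) (j : Fin n') :
    costLB k n' ζ (insert (Sum.inr (Sum.inl j)) (uCenters k n'))
      = (((k - 1) * (n' - 1) : ℕ) : ℝ) :=
  (costLB_insert_Y_le j).antisymm (le_costLB_insert_Y hζ j)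

lemma card_uCenters : (uCenters k n').card = k - 1 := by
  rw [uCenters, Finset.card_image_of_injective _ Sum.inl_injective, Finset.card_univ,
    Fintype.card_fin]

lemma card_insert_inr_uCenters (hk : 1 ≤ k) (a : Fin n' ⊕ (Fin (k - 1) × Fin (n' - 1))) :
    (insert (Sum.inr a) (uCenters k n')).card = k := by
  rw [Finset.card_insert_of_notMem (by simp [uCenters]), card_uCenters]
  omega

lemma le_costLB_of_inl_notMem (hζ : 0 ≤ ζ) {R : Finset (LBV k n')} (hR : R.Nonempty)
    {i : Fin (k - 1)} (hi : Sum.inl i ∉ R) : ζ ≤ costLB k n' ζ R := by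
  refine le_of_eq_of_le (by simp) (sum_le_costLB hR (Pi.single (Sum.inl i) ζ) ?_)
  intro v r hr
  by_cases hv : v = Sum.inl i
  · subst hv
    rw [Pi.single_eq_same, dLB_inl_of_ne (ne_of_mem_of_not_mem hr hi).symm]
  · rw [Pi.single_eq_of_ne hv]
    exact dLB_nonneg hζ v r

lemma le_costLB_of_card_eq (hζ1 : 1 ≤ ζ) (hζ : (((k - 1) * (n' - 1) : ℕ) : ℝ) ≤ ζ)
    {R : Finset (LBV k n')} (hR : R.card = k) :
    (((k - 1) * (n' - 1) : ℕ) : ℝ) ≤ costLB k n' ζ R := by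
  rcases R.eq_empty_or_nonempty with rfl | hne
  · obtain rfl : k = 0 := hR.symm
    simpa using costLB_nonneg (zero_le_one.trans hζ1) ∅
  by_cases hU : uCenters k n' ⊆ R
  · have hk : 0 < k := hR ▸ hne.card_pos
    obtain ⟨w, hw, rfl⟩ := Finset.exists_eq_insert_iff.mpr ⟨hU, by rw [card_uCenters]; omega⟩
    rcases w with i | j | q
    · exact absurd (Finset.mem_image_of_mem _ (Finset.mem_univ i)) hw
    · exact le_costLB_insert_Y hζ1 j
    · exact le_costLB_insert_X hζ1 q
  · obtain ⟨_, hmem, hi⟩ := Finset.not_subset.mp hU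
    obtain ⟨i, -, rfl⟩ := Finset.mem_image.mp hmem
    exact hζ.trans (le_costLB_of_inl_notMem (zero_le_one.trans hζ1) hne hi)

end

theorem stmt1_general (n k : ℕ) (hk : 2 ≤ k) (hnk : 3 ≤ n / k) :
    (∀ j : Fin (n / k),
      costLB k (n / k) ((n : ℝ) ^ 3)
          (insert (Sum.inr (Sum.inl j))
            (Finset.univ.image (Sum.inl : Fin (k - 1) → LBV k (n / k))))
        = ((k : ℝ) - 1) * (((n / k : ℕ) : ℝ) - 1)) ∧
    (∀ R : Finset (LBV k (n / k)), R.card = k →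
      ((k : ℝ) - 1) * (((n / k : ℕ) : ℝ) - 1) ≤ costLB k (n / k) ((n : ℝ) ^ 3) R) ∧
    optLB k (n / k) ((n : ℝ) ^ 3) k = ((k : ℝ) - 1) * (((n / k : ℕ) : ℝ) - 1) ∧
    optLB k (n / k) ((n : ℝ) ^ 3) k ≤ (n : ℝ) := by
  have hcast : ((k : ℝ) - 1) * (((n / k : ℕ) : ℝ) - 1) = (((k - 1) * (n / k - 1) : ℕ) : ℝ) := by
    push_cast [Nat.cast_sub (by omega : 1 ≤ k), Nat.cast_sub (by omega : 1 ≤ n / k)]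
    ring
  have hle_n : (k - 1) * (n / k - 1) ≤ n :=
    (Nat.mul_le_mul (Nat.sub_le k 1) (Nat.sub_le _ 1)).trans (Nat.mul_div_le n k)
  have hn : 1 ≤ n := by have := Nat.div_le_self n k; omega
  have hζ1 : (1 : ℝ) ≤ (n : ℝ) ^ 3 := by exact_mod_cast Nat.one_le_pow _ _ hn
  have hζ : (((k - 1) * (n / k - 1) : ℕ) : ℝ) ≤ (n : ℝ) ^ 3 := by
    exact_mod_cast hle_n.trans (Nat.le_self_pow (by norm_num) n)
  rw [hcast]
  have hopt : optLB k (n / k) ((n : ℝ) ^ 3) k = (((k - 1) * (n / k - 1) : ℕ) : ℝ) :=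
    IsLeast.csInf_eq ⟨⟨_, card_insert_inr_uCenters (by omega) (Sum.inl ⟨0, by omega⟩),
      (costLB_insert_Y hζ1 _).symm⟩,
      by rintro _ ⟨R, hR, rfl⟩; exact le_costLB_of_card_eq hζ1 hζ hR⟩
  exact ⟨fun j => costLB_insert_Y hζ1 j, fun R hR => le_costLB_of_card_eq hζ1 hζ hR, hopt,
    hopt ▸ by exact_mod_cast hle_n⟩

/-- With `ζ = n³`, the optimal `k`-median cost of the lower-bound instance
equals `(k−1)(n/k − 1)`: it is attained by the set `U ∪ {y}` for any `y ∈ Y`,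
every subset `R ⊆ V` with `|R| = k` has `COST_{n³}(R) ≥ (k−1)(n/k − 1)`, and
in particular `opt_{n³}(k) ≤ n`. -/
theorem stmt1 (n k : ℕ) (hk : 2 ≤ k) (hdvd : k ∣ n) (hnk : 3 ≤ n / k) :
    (∀ j : Fin (n / k),
      costLB k (n / k) ((n : ℝ) ^ 3)
          (insert (Sum.inr (Sum.inl j))
            (Finset.univ.image (Sum.inl : Fin (k - 1) → LBV k (n / k))))
        = ((k : ℝ) - 1) * (((n / k : ℕ) : ℝ) - 1)) ∧
    (∀ R : Finset (LBV k (n / k)), R.card = k →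
      ((k : ℝ) - 1) * (((n / k : ℕ) : ℝ) - 1) ≤ costLB k (n / k) ((n : ℝ) ^ 3) R) ∧
    optLB k (n / k) ((n : ℝ) ^ 3) k = ((k : ℝ) - 1) * (((n / k : ℕ) : ℝ) - 1) ∧
    optLB k (n / k) ((n : ℝ) ^ 3) k ≤ (n : ℝ) :=
  stmt1_general n k hk hnk
end

section
/- With ζ = 2, the optimal k-median cost of the lower-bound instance equals 2(k−1); it is attained by any set consisting of one vertex y ∈ Y together with one vertex x_h ∈ X_h for each h = 2, …, k, and every subset R ⊆ V with |R| = k has COST_2(R) ≥ 2(k−1). -/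
namespace LBaux
variable {k n' : ℕ}

def grpOf : LBV k n' → Option (Option (Fin (k - 1)))
  | Sum.inl _ => none
  | Sum.inr (Sum.inl _) => some none
  | Sum.inr (Sum.inr p) => some (some p.1)

lemma d_nonneg (a b : LBV k n') : 0 ≤ dLB k n' 2 a b := by
  unfold dLB
  rcases a with u | y | p <;> rcases b with u' | y' | q <;> dsimp only <;>
    split_ifs <;> norm_num

lemma d_inl (u : Fin (k-1)) (r : LBV k n') (h : r ≠ Sum.inl u) : dLB k n' 2 (Sum.inl u) r = 2 := by
  unfold dLB
  rcases r with u' | y' | q <;> dsimp only <;> rw [if_neg (by simp_all [eq_comm])]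

lemma d_same (v r : LBV k n') (hv : (grpOf v).isSome) (h : grpOf v = grpOf r) :
    dLB k n' 2 v r = 0 := by
  unfold dLB
  rcases v with u | y | p <;> rcases r with u' | y' | q <;>
    simp_all [grpOf] <;> split_ifs <;> simp_all

lemma one_le_d (v r : LBV k n') (hv : (grpOf v).isSome) (hne : grpOf v ≠ grpOf r) :
    1 ≤ dLB k n' 2 v r := by
  unfold dLB
  rcases v with u | y | p <;> rcases r with u' | y' | q <;>
    simp_all [grpOf] <;> split_ifs <;> simp_all <;> norm_num

end LBaux

namespace LBaux
variable {k n' : ℕ}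

lemma bdd (R : Finset (LBV k n')) (v : LBV k n') :
    BddBelow ((fun r => dLB k n' 2 v r) '' ↑R) := by
  refine ⟨0, fun x hx => ?_⟩
  obtain ⟨r, -, rfl⟩ := hx
  exact d_nonneg v r

lemma t_le (R : Finset (LBV k n')) (v r : LBV k n') (hr : r ∈ R) :
    sInf ((fun r => dLB k n' 2 v r) '' ↑R) ≤ dLB k n' 2 v r :=
  csInf_le (bdd R v) ⟨r, by simpa using hr, rfl⟩

lemma t_ge (R : Finset (LBV k n')) (hR : R.Nonempty) (v : LBV k n') (c : ℝ)
    (h : ∀ r ∈ R, c ≤ dLB k n' 2 v r) :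
    c ≤ sInf ((fun r => dLB k n' 2 v r) '' ↑R) := by
  refine le_csInf ⟨_, ⟨hR.choose, by simpa using hR.choose_spec, rfl⟩⟩ ?_
  rintro x ⟨r, hr, rfl⟩
  exact h r (by simpa using hr)

lemma t_nonneg (R : Finset (LBV k n')) (v : LBV k n') :
    0 ≤ sInf ((fun r => dLB k n' 2 v r) '' ↑R) := by
  apply Real.sInf_nonneg
  rintro x ⟨r, -, rfl⟩
  exact d_nonneg v r

end LBaux

namespace LBaux
variable {k n' : ℕ}

lemma cost_R0 (hk : 2 ≤ k) (y : Fin n') (f : Fin (k-1) → Fin (n'-1)) :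
    costLB k n' 2 (insert (Sum.inr (Sum.inl y))
      (Finset.univ.image (fun h => (Sum.inr (Sum.inr (h, f h)) : LBV k n'))))
      = 2 * ((k : ℝ) - 1) := by
  set R₀ : Finset (LBV k n') := insert (Sum.inr (Sum.inl y))
      (Finset.univ.image (fun h => (Sum.inr (Sum.inr (h, f h)) : LBV k n'))) with hR₀
  have hmem : ∀ r ∈ R₀, r = Sum.inr (Sum.inl y) ∨ ∃ h, r = Sum.inr (Sum.inr (h, f h)) := by
    intro r hr
    simp only [hR₀, Finset.mem_insert, Finset.mem_image, Finset.mem_univ, true_and] at hr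
    rcases hr with h | ⟨h, rfl⟩
    · exact Or.inl h
    · exact Or.inr ⟨h, rfl⟩
  have hyR : (Sum.inr (Sum.inl y) : LBV k n') ∈ R₀ := Finset.mem_insert_self _ _
  have h1 : ∀ u : Fin (k-1), sInf ((fun r => dLB k n' 2 (Sum.inl u) r) '' ↑R₀) = 2 := by
    intro u
    refine le_antisymm ?_ ?_
    · calc sInf _ ≤ dLB k n' 2 (Sum.inl u) (Sum.inr (Sum.inl y)) := t_le R₀ _ _ hyR
        _ = 2 := by unfold dLB; rw [if_neg (by simp)]
    · refine t_ge R₀ ⟨_, hyR⟩ _ 2 fun r hr => ?_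
      rw [d_inl u r (by rcases hmem r hr with rfl | ⟨h, rfl⟩ <;> simp)]
  have h2 : ∀ y' : Fin n', sInf ((fun r => dLB k n' 2 (Sum.inr (Sum.inl y')) r) '' ↑R₀) = 0 := by
    intro y'
    refine le_antisymm ?_ (t_nonneg R₀ _)
    calc sInf _ ≤ dLB k n' 2 (Sum.inr (Sum.inl y')) (Sum.inr (Sum.inl y)) := t_le R₀ _ _ hyR
      _ = 0 := d_same _ _ (by simp [grpOf]) (by simp [grpOf])
  have h3 : ∀ p : Fin (k-1) × Fin (n'-1),
      sInf ((fun r => dLB k n' 2 (Sum.inr (Sum.inr p)) r) '' ↑R₀) = 0 := by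
    intro p
    have hp : (Sum.inr (Sum.inr (p.1, f p.1)) : LBV k n') ∈ R₀ := by
      apply Finset.mem_insert_of_mem
      exact Finset.mem_image_of_mem _ (Finset.mem_univ p.1)
    refine le_antisymm ?_ (t_nonneg R₀ _)
    calc sInf _ ≤ dLB k n' 2 (Sum.inr (Sum.inr p)) (Sum.inr (Sum.inr (p.1, f p.1))) :=
          t_le R₀ _ _ hp
      _ = 0 := d_same _ _ (by simp [grpOf]) (by simp [grpOf])
  rw [costLB, Fintype.sum_sum_type, Fintype.sum_sum_type]
  simp only [h1, h2, h3, Finset.sum_const, Finset.card_univ, Fintype.card_fin,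
    smul_zero, add_zero, nsmul_eq_mul]
  have : ((k - 1 : ℕ) : ℝ) = (k : ℝ) - 1 := by
    have : 1 ≤ k := by omega
    push_cast [this]; ring
  rw [this]; ring

end LBaux

namespace LBaux
variable {k n' : ℕ}

lemma cost_lb (hk : 2 ≤ k) (hn : 3 ≤ n') (R : Finset (LBV k n')) (hcard : R.card = k) :
    2 * ((k : ℝ) - 1) ≤ costLB k n' 2 R := by
  have hRne : R.Nonempty := Finset.card_pos.mp (by omega)
  set t : LBV k n' → ℝ := fun v => sInf ((fun r => dLB k n' 2 v r) '' ↑R) with ht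
  -- U vertices
  set UF : Finset (Fin (k-1)) := Finset.univ.filter (fun u => (Sum.inl u : LBV k n') ∈ R) with hUFdef
  set UC : Finset (Fin (k-1)) := Finset.univ.filter (fun u => ¬ (Sum.inl u : LBV k n') ∈ R) with hUCdef
  have hUF : UF.card + UC.card = k - 1 := by
    rw [hUFdef, hUCdef, Finset.card_filter_add_card_filter_not, Finset.card_univ,
      Fintype.card_fin]
  have hUsum : (UC.card : ℝ) * 2 ≤ ∑ u : Fin (k-1), t (Sum.inl u) := by
    calc (UC.card : ℝ) * 2 = ∑ _u ∈ UC, (2:ℝ) := by rw [Finset.sum_const, nsmul_eq_mul]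
      _ ≤ ∑ u ∈ UC, t (Sum.inl u) := by
          refine Finset.sum_le_sum fun u hu => ?_
          refine t_ge R hRne _ 2 fun r hr => ?_
          have hne : r ≠ Sum.inl u := by
            rintro rfl
            exact (Finset.mem_filter.mp hu).2 hr
          rw [d_inl u r hne]
      _ ≤ ∑ u : Fin (k-1), t (Sum.inl u) :=
          Finset.sum_le_sum_of_subset_of_nonneg (Finset.subset_univ _)
            (fun u _ _ => t_nonneg R _)
  -- covered groups
  set nC : Finset (LBV k n') := R.filter (fun r => (grpOf r).isSome) with hnCdef
  set C : Finset (Option (Fin (k-1))) := nC.image (fun r => (grpOf r).getD none) with hCdef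
  have hCle : C.card ≤ nC.card := Finset.card_image_le
  have hcount : nC.card + UF.card ≤ k := by
    have hsub : nC ∪ UF.image (fun u => (Sum.inl u : LBV k n')) ⊆ R := by
      intro x hx
      rcases Finset.mem_union.mp hx with hx | hx
      · exact Finset.mem_of_mem_filter _ hx
      · obtain ⟨u, hu, rfl⟩ := Finset.mem_image.mp hx
        exact (Finset.mem_filter.mp hu).2
    have hdisj : Disjoint nC (UF.image (fun u => (Sum.inl u : LBV k n'))) := by
      rw [Finset.disjoint_left]
      rintro x hx hx'
      obtain ⟨u, -, rfl⟩ := Finset.mem_image.mp hx'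
      have := (Finset.mem_filter.mp hx).2
      simp [grpOf] at this
    have himg : (UF.image (fun u => (Sum.inl u : LBV k n'))).card = UF.card :=
      Finset.card_image_of_injective _ (fun a b h => by injection h)
    have := Finset.card_le_card hsub
    rw [Finset.card_union_of_disjoint hdisj, himg, hcard] at this
    exact this
  have huncov : ∀ g ∉ C, ∀ r ∈ R, grpOf r ≠ some g := by
    intro g hg r hr heq
    refine hg (Finset.mem_image.mpr ⟨r, Finset.mem_filter.mpr ⟨hr, by rw [heq]; rfl⟩, by rw [heq]; rfl⟩)
  set S : Option (Fin (k-1)) → ℝ := fun g =>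
    g.elim (∑ y : Fin n', t (Sum.inr (Sum.inl y)))
      (fun h => ∑ x : Fin (n'-1), t (Sum.inr (Sum.inr (h, x)))) with hSdef
  have hone : ∀ g ∉ C, ∀ v : LBV k n', grpOf v = some g → (1:ℝ) ≤ t v := by
    intro g hg v hv
    refine t_ge R hRne v 1 fun r hr => ?_
    refine one_le_d v r (by rw [hv]; rfl) fun heq => ?_
    exact huncov g hg r hr (heq ▸ hv)
  have hSge : ∀ g ∉ C, (2:ℝ) ≤ S g := by
    intro g hg
    cases g with
    | none =>
        have hcard' : (Finset.univ : Finset (Fin n')).card • (1:ℝ) ≤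
            ∑ y : Fin n', t (Sum.inr (Sum.inl y)) :=
          Finset.card_nsmul_le_sum _ _ _ (fun y _ => hone _ hg _ rfl)
        have : (2:ℝ) ≤ (Finset.univ : Finset (Fin n')).card • (1:ℝ) := by
          rw [Finset.card_univ, Fintype.card_fin, nsmul_eq_mul, mul_one]
          exact_mod_cast (by omega : 2 ≤ n')
        exact le_trans this hcard'
    | some h =>
        have hcard' : (Finset.univ : Finset (Fin (n'-1))).card • (1:ℝ) ≤
            ∑ x : Fin (n'-1), t (Sum.inr (Sum.inr (h, x))) :=
          Finset.card_nsmul_le_sum _ _ _ (fun x _ => hone _ hg _ rfl)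
        have : (2:ℝ) ≤ (Finset.univ : Finset (Fin (n'-1))).card • (1:ℝ) := by
          rw [Finset.card_univ, Fintype.card_fin, nsmul_eq_mul, mul_one]
          exact_mod_cast (by omega : 2 ≤ n' - 1)
        exact le_trans this hcard'
  have hSnonneg : ∀ g, 0 ≤ S g := by
    rintro (_ | h) <;> exact Finset.sum_nonneg (fun _ _ => t_nonneg R _)
  have hSsum : ((Finset.univ \ C).card : ℝ) * 2 ≤ ∑ g : Option (Fin (k-1)), S g := by
    calc ((Finset.univ \ C).card : ℝ) * 2 = ∑ _g ∈ Finset.univ \ C, (2:ℝ) := by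
          rw [Finset.sum_const, nsmul_eq_mul]
      _ ≤ ∑ g ∈ Finset.univ \ C, S g :=
          Finset.sum_le_sum fun g hg => hSge g (Finset.mem_sdiff.mp hg).2
      _ ≤ ∑ g : Option (Fin (k-1)), S g :=
          Finset.sum_le_sum_of_subset_of_nonneg (Finset.sdiff_subset)
            (fun g _ _ => hSnonneg g)
  have hsdcard : (Finset.univ \ C).card = k - C.card := by
    rw [Finset.card_sdiff_of_subset (Finset.subset_univ _), Finset.card_univ, Fintype.card_option,
      Fintype.card_fin]
    omega
  have hcost : costLB k n' 2 R =
      ∑ u : Fin (k-1), t (Sum.inl u) + ∑ g : Option (Fin (k-1)), S g := by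
    rw [costLB, Fintype.sum_sum_type, Fintype.sum_sum_type, Fintype.sum_option, hSdef]
    simp only [Option.elim]
    rw [Fintype.sum_prod_type]
  have hN : k - 1 ≤ (Finset.univ \ C).card + UC.card := by omega
  have hc : (k : ℝ) - 1 ≤ ((Finset.univ \ C).card : ℝ) + (UC.card : ℝ) := by
    have h1 : ((k - 1 : ℕ) : ℝ) = (k:ℝ) - 1 := by
      have : 1 ≤ k := by omega
      push_cast [this]; ring
    have := (Nat.cast_le (α := ℝ)).mpr hN
    push_cast at this
    linarith [h1 ▸ this]
  linarith [hUsum, hSsum, hcost.ge]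

end LBaux

/-- With `ζ = 2`, the optimal `k`-median cost of the lower-bound instance
equals `2(k−1)`: it is attained by any set consisting of one vertex `y ∈ Y`
together with one vertex `x_h ∈ X_h` for each `h = 2, …, k`, and every subset
`R ⊆ V` with `|R| = k` has `COST_2(R) ≥ 2(k−1)`. -/
theorem stmt2 (n k : ℕ) (hk : 2 ≤ k) (hdvd : k ∣ n) (hnk : 3 ≤ n / k) :
    optLB k (n / k) 2 k = 2 * ((k : ℝ) - 1) ∧
    (∀ (y : Fin (n / k)) (f : Fin (k - 1) → Fin (n / k - 1)),
      costLB k (n / k) 2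
          (insert (Sum.inr (Sum.inl y))
            (Finset.univ.image
              (fun h => (Sum.inr (Sum.inr (h, f h)) : LBV k (n / k)))))
        = 2 * ((k : ℝ) - 1)) ∧
    (∀ R : Finset (LBV k (n / k)), R.card = k →
      2 * ((k : ℝ) - 1) ≤ costLB k (n / k) 2 R) := by
  have hk1 : 1 ≤ k := by omega
  have hy0 : 0 < n / k := by omega
  have hx0 : 0 < n / k - 1 := by omega
  have part3 : ∀ R : Finset (LBV k (n / k)), R.card = k →
      2 * ((k : ℝ) - 1) ≤ costLB k (n / k) 2 R := fun R h => LBaux.cost_lb hk hnk R h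
  have part2 : ∀ (y : Fin (n / k)) (f : Fin (k - 1) → Fin (n / k - 1)),
      costLB k (n / k) 2
          (insert (Sum.inr (Sum.inl y))
            (Finset.univ.image
              (fun h => (Sum.inr (Sum.inr (h, f h)) : LBV k (n / k)))))
        = 2 * ((k : ℝ) - 1) := fun y f => LBaux.cost_R0 hk y f
  refine ⟨?_, part2, part3⟩
  set y0 : Fin (n / k) := ⟨0, hy0⟩
  set f0 : Fin (k - 1) → Fin (n / k - 1) := fun _ => ⟨0, hx0⟩
  set R₀ : Finset (LBV k (n / k)) := insert (Sum.inr (Sum.inl y0))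
      (Finset.univ.image (fun h => (Sum.inr (Sum.inr (h, f0 h)) : LBV k (n / k))))
  have hinj : Function.Injective
      (fun h => (Sum.inr (Sum.inr (h, f0 h)) : LBV k (n / k))) := by
    intro a b hab
    simp only [Sum.inr.injEq, Prod.mk.injEq] at hab
    exact hab.1
  have hcard : R₀.card = k := by
    rw [Finset.card_insert_of_notMem (by simp), Finset.card_image_of_injective _ hinj,
      Finset.card_univ, Fintype.card_fin]
    omega
  have hmem : 2 * ((k : ℝ) - 1) ∈
      {c : ℝ | ∃ R : Finset (LBV k (n / k)), R.card = k ∧ c = costLB k (n / k) 2 R} :=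
    ⟨R₀, hcard, (part2 y0 f0).symm⟩
  have hlb : ∀ c ∈ {c : ℝ | ∃ R : Finset (LBV k (n / k)), R.card = k ∧ c = costLB k (n / k) 2 R},
      2 * ((k : ℝ) - 1) ≤ c := by
    rintro c ⟨R, hR, rfl⟩
    exact part3 R hR
  exact le_antisymm (csInf_le ⟨_, hlb⟩ hmem) (le_csInf ⟨_, hmem⟩ hlb)
end

section
/- Let n, k be integers with k ≥ 2, k dividing n, and n/k ≥ 3. Then there exist an n-point set V and two pseudometrics d and d' on V inducing the same ordering of pairwise distances (d(a,b) ≤ d(c,e) if and only if d'(a,b) ≤ d'(c,e) for all a,b,c,e ∈ V), such that the optimal k-median costs satisfy opt_d(k) = 2(k−1) and opt_{d'}(k) = (k−1)(n/k−1) ≤ n, and every subset R ⊆ V with |R| ≤ 2k−2 satisfies COST_d(R) ≥ n/k − 1 or COST_{d'}(R) ≥ n³ ≥ n² · opt_{d'}(k). -/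
/-- The `k`-median cost of a center set `R` under a distance function `d` on a
finite type `V`: `COST_d(R) = Σ_{v ∈ V} min_{r ∈ R} d(v, r)`. -/
noncomputable def kmedCost {V : Type} [Fintype V] (d : V → V → ℝ) (R : Finset V) : ℝ :=
  ∑ v : V, sInf ((d v) '' ↑R)

/-- `opt_d(k) = min { COST_d(R) : R ⊆ V, |R| = k }`. -/
noncomputable def kmedOpt {V : Type} [Fintype V] (d : V → V → ℝ) (k : ℕ) : ℝ :=
  sInf {c : ℝ | ∃ R : Finset V, R.card = k ∧ c = kmedCost d R}

namespace S5
open Finset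

variable {k m : ℕ}

/-- singleton points: first coordinate < k-1 and second coordinate 0. -/
def sing (k : ℕ) {m : ℕ} (p : Fin k × Fin m) : Prop :=
  p.1.val < k - 1 ∧ p.2.val = 0

instance : DecidablePred (sing k (m := m)) := fun _ => instDecidableAnd

def dd (k m : ℕ) (H : ℝ) (p q : Fin k × Fin m) : ℝ :=
  if p.1 = q.1 ∧ (sing k p ↔ sing k q) then 0
  else if ¬ sing k p ∧ ¬ sing k q then 1 else H

lemma dd_self (H : ℝ) (p : Fin k × Fin m) : dd k m H p p = 0 :=
  if_pos ⟨rfl, Iff.rfl⟩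

lemma dd_nonneg {H : ℝ} (hH : 0 ≤ H) (p q : Fin k × Fin m) : 0 ≤ dd k m H p q := by
  unfold dd; split_ifs <;> linarith

lemma dd_symm (H : ℝ) (p q : Fin k × Fin m) : dd k m H p q = dd k m H q p := by
  unfold dd
  have e1 : (p.1 = q.1 ∧ (sing k p ↔ sing k q)) ↔ (q.1 = p.1 ∧ (sing k q ↔ sing k p)) := by
    constructor <;> rintro ⟨a, b⟩ <;> exact ⟨a.symm, b.symm⟩
  have e2 : (¬ sing k p ∧ ¬ sing k q) ↔ (¬ sing k q ∧ ¬ sing k p) := and_comm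
  rw [if_congr e1 rfl (if_congr e2 rfl rfl)]

lemma dd_congr_left {H : ℝ} {p q : Fin k × Fin m} (h1 : p.1 = q.1)
    (h2 : sing k p ↔ sing k q) (r : Fin k × Fin m) :
    dd k m H p r = dd k m H q r := by
  unfold dd
  have e1 : (p.1 = r.1 ∧ (sing k p ↔ sing k r)) ↔ (q.1 = r.1 ∧ (sing k q ↔ sing k r)) := by
    rw [h1]; constructor <;> rintro ⟨a, b⟩
    · exact ⟨a, h2.symm.trans b⟩
    · exact ⟨a, h2.trans b⟩
  have e2 : (¬ sing k p ∧ ¬ sing k r) ↔ (¬ sing k q ∧ ¬ sing k r) := by tauto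
  rw [if_congr e1 rfl (if_congr e2 rfl rfl)]

lemma dd_vals (H : ℝ) (p q : Fin k × Fin m) :
    dd k m H p q = 0 ∨ dd k m H p q = 1 ∨ dd k m H p q = H := by
  unfold dd; split_ifs <;> tauto

lemma dd_eq_one_cases {H : ℝ} (hH : 2 ≤ H) {p q : Fin k × Fin m}
    (h : dd k m H p q = 1) : ¬ sing k p ∧ ¬ sing k q := by
  unfold dd at h
  split_ifs at h with a b
  · norm_num at h
  · exact b
  · linarith

lemma dd_triangle {H : ℝ} (hH : 2 ≤ H) (p q r : Fin k × Fin m) :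
    dd k m H p r ≤ dd k m H p q + dd k m H q r := by
  by_cases h1 : p.1 = q.1 ∧ (sing k p ↔ sing k q)
  · have h0 : dd k m H p q = 0 := if_pos h1
    rw [h0, zero_add, dd_congr_left h1.1 h1.2]
  · by_cases h2 : q.1 = r.1 ∧ (sing k q ↔ sing k r)
    · have h0 : dd k m H q r = 0 := if_pos h2
      rw [h0, add_zero, dd_symm (k := k) (m := m) H p r,
        dd_congr_left h2.1.symm h2.2.symm, dd_symm]
    · have hpq : dd k m H p q = 1 ∨ dd k m H p q = H := by
        rcases dd_vals (k := k) (m := m) H p q with h | h | h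
        · exfalso
          unfold dd at h
          rw [if_neg h1] at h
          split_ifs at h <;> linarith
        · exact Or.inl h
        · exact Or.inr h
      have hqr : dd k m H q r = 1 ∨ dd k m H q r = H := by
        rcases dd_vals (k := k) (m := m) H q r with h | h | h
        · exfalso
          unfold dd at h
          rw [if_neg h2] at h
          split_ifs at h <;> linarith
        · exact Or.inl h
        · exact Or.inr h
      have hprv := dd_vals (k := k) (m := m) H p r
      rcases hpq with h | h
      · rcases hqr with h' | h'
        · -- both 1, so p and r are non-singletons, hence d p r ≤ 1
          obtain ⟨hp, _⟩ := dd_eq_one_cases hH h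
          obtain ⟨_, hr⟩ := dd_eq_one_cases hH h'
          have : dd k m H p r ≤ 1 := by
            unfold dd; split_ifs with a b
            · norm_num
            · norm_num
            · exact absurd ⟨hp, hr⟩ b
          linarith
        · rcases hprv with h'' | h'' | h'' <;> rw [h, h', h''] <;> linarith
      · rcases hqr with h' | h' <;>
          rcases hprv with h'' | h'' | h'' <;> rw [h, h', h''] <;> linarith

lemma dd_order (H1 H2 : ℝ) (h1 : 2 ≤ H1) (h2 : 2 ≤ H2) (a b c e : Fin k × Fin m) :
    dd k m H1 a b ≤ dd k m H1 c e ↔ dd k m H2 a b ≤ dd k m H2 c e := by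
  unfold dd
  split_ifs <;> constructor <;> intro <;> linarith

/-! ### Counting helpers -/

lemma sum_range_pred {M : Type*} [AddCommMonoid M] (K : ℕ) (c : M) :
    ∑ i ∈ Finset.range (K + 1), (if i < K then c else 0) = K • c := by
  rw [Finset.sum_range_succ, if_neg (lt_irrefl K), add_zero,
    Finset.sum_congr rfl fun i hi => if_pos (Finset.mem_range.mp hi),
    Finset.sum_const, Finset.card_range]

lemma sum_fin_zero {M : Type*} [AddCommMonoid M] (hm : 0 < m) (c : M) :
    ∑ j : Fin m, (if (j : ℕ) = 0 then c else 0) = c := by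
  rw [Fin.sum_univ_eq_sum_range (fun t => if t = 0 then c else 0)]
  obtain ⟨M, rfl⟩ : ∃ M, m = M + 1 := ⟨m - 1, by omega⟩
  rw [Finset.sum_range_succ']
  simp

lemma sum_fin_nonzero {M : Type*} [AddCommMonoid M] (hm : 0 < m) (c : M) :
    ∑ j : Fin m, (if (j : ℕ) ≠ 0 then c else 0) = (m - 1) • c := by
  rw [Fin.sum_univ_eq_sum_range (fun t => if t ≠ 0 then c else 0)]
  obtain ⟨M, rfl⟩ : ∃ M, m = M + 1 := ⟨m - 1, by omega⟩
  rw [Finset.sum_range_succ']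
  simp [Finset.sum_const]

lemma sum_sing {M : Type*} [AddCommMonoid M] (hk : 1 ≤ k) (hm : 0 < m) (c : M) :
    ∑ v : Fin k × Fin m, (if v.1.val < k - 1 ∧ v.2.val = 0 then c else 0)
      = (k - 1) • c := by
  rw [Fintype.sum_prod_type]
  have inner : ∀ i : Fin k,
      (∑ j : Fin m, if i.val < k - 1 ∧ (j : ℕ) = 0 then c else 0)
        = if i.val < k - 1 then c else 0 := by
    intro i
    by_cases h : i.val < k - 1
    · rw [if_pos h]
      simp only [h, true_and]
      exact sum_fin_zero hm c
    · simp [h]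
  rw [Finset.sum_congr rfl fun i _ => inner i,
    Fin.sum_univ_eq_sum_range (fun t => if t < k - 1 then c else 0)]
  obtain ⟨K, rfl⟩ : ∃ K, k = K + 1 := ⟨k - 1, by omega⟩
  simp only [Nat.add_sub_cancel]
  exact sum_range_pred K c

lemma sum_blob {M : Type*} [AddCommMonoid M] (hk : 1 ≤ k) (hm : 0 < m) (c : M) :
    ∑ v : Fin k × Fin m, (if v.1.val < k - 1 ∧ v.2.val ≠ 0 then c else 0)
      = ((k - 1) * (m - 1)) • c := by
  rw [Fintype.sum_prod_type]
  have inner : ∀ i : Fin k,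
      (∑ j : Fin m, if i.val < k - 1 ∧ (j : ℕ) ≠ 0 then c else 0)
        = if i.val < k - 1 then (m - 1) • c else 0 := by
    intro i
    by_cases h : i.val < k - 1
    · rw [if_pos h]
      simp only [h, true_and]
      exact sum_fin_nonzero hm c
    · simp [h]
  rw [Finset.sum_congr rfl fun i _ => inner i,
    Fin.sum_univ_eq_sum_range (fun t => if t < k - 1 then (m - 1) • c else 0)]
  obtain ⟨K, rfl⟩ : ∃ K, k = K + 1 := ⟨k - 1, by omega⟩
  simp only [Nat.add_sub_cancel]
  rw [sum_range_pred K ((m - 1) • c), smul_smul]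

lemma card_sing_filter (hk : 1 ≤ k) (hm : 0 < m) :
    ((univ : Finset (Fin k × Fin m)).filter (sing k)).card = k - 1 := by
  rw [Finset.card_filter]
  have : ∀ v : Fin k × Fin m,
      (if sing k v then 1 else 0) = (if v.1.val < k - 1 ∧ v.2.val = 0 then 1 else 0) := by
    intro v; rfl
  rw [Finset.sum_congr rfl fun v _ => this v]
  rw [sum_sing hk hm (1 : ℕ), smul_eq_mul, mul_one]

lemma card_ne_zero_filter (hm : 0 < m) :
    ((univ : Finset (Fin m)).filter (fun j : Fin m => ¬ (j : ℕ) = 0)).card = m - 1 := by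
  rw [Finset.card_filter]
  have := sum_fin_nonzero (m := m) hm (1 : ℕ)
  simp only [smul_eq_mul, mul_one] at this
  rw [← this]

/-! ### Pointwise sInf lemmas -/

lemma pt_le {H : ℝ} {R : Finset (Fin k × Fin m)} {v r : Fin k × Fin m} (hr : r ∈ R) :
    sInf (dd k m H v '' ↑R) ≤ dd k m H v r :=
  csInf_le ((R.finite_toSet.image _).bddBelow) ⟨r, hr, rfl⟩

lemma le_pt {H : ℝ} {R : Finset (Fin k × Fin m)} {v : Fin k × Fin m}
    (hR : R.Nonempty) {c : ℝ} (h : ∀ r ∈ R, c ≤ dd k m H v r) :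
    c ≤ sInf (dd k m H v '' ↑R) := by
  refine le_csInf ((Finset.coe_nonempty.mpr hR).image _) ?_
  rintro x ⟨r, hr, rfl⟩
  exact h r hr

lemma pt_nonneg {H : ℝ} (hH : 0 ≤ H) (R : Finset (Fin k × Fin m)) (v : Fin k × Fin m) :
    0 ≤ sInf (dd k m H v '' ↑R) := by
  apply Real.sInf_nonneg
  rintro x ⟨r, hr, rfl⟩
  exact dd_nonneg hH v r

lemma cost_nonneg {H : ℝ} (hH : 0 ≤ H) (R : Finset (Fin k × Fin m)) :
    0 ≤ kmedCost (dd k m H) R :=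
  Finset.sum_nonneg fun v _ => pt_nonneg hH R v

lemma pt_eq_zero {H : ℝ} (hH : 0 ≤ H) {R : Finset (Fin k × Fin m)}
    {v r : Fin k × Fin m} (hr : r ∈ R) (h0 : dd k m H v r = 0) :
    sInf (dd k m H v '' ↑R) = 0 :=
  le_antisymm (h0 ▸ pt_le hr) (pt_nonneg hH R v)


/-! ### Witness center sets -/

def R0 (k m : ℕ) (hm : 0 < m) : Finset (Fin k × Fin m) :=
  univ.image fun i => (i, ⟨m - 1, Nat.sub_lt hm Nat.one_pos⟩)

def R1 (k m : ℕ) (hm : 0 < m) : Finset (Fin k × Fin m) :=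
  univ.image fun i => (i, ⟨0, hm⟩)

lemma R0_card (hm : 0 < m) : (R0 k m hm).card = k := by
  rw [R0, Finset.card_image_of_injective _ (fun a b hab => (Prod.ext_iff.mp hab).1),
    Finset.card_univ, Fintype.card_fin]

lemma R1_card (hm : 0 < m) : (R1 k m hm).card = k := by
  rw [R1, Finset.card_image_of_injective _ (fun a b hab => (Prod.ext_iff.mp hab).1),
    Finset.card_univ, Fintype.card_fin]

lemma R0_nonempty (hk : 1 ≤ k) (hm : 0 < m) : (R0 k m hm).Nonempty := by
  apply Finset.card_pos.mp
  rw [R0_card hm]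
  omega

lemma R1_nonempty (hk : 1 ≤ k) (hm : 0 < m) : (R1 k m hm).Nonempty := by
  apply Finset.card_pos.mp
  rw [R1_card hm]
  omega

lemma not_sing_top (hk : 2 ≤ k) (hm : 3 ≤ m) (i : Fin k) :
    ¬ sing k ((i, ⟨m - 1, Nat.sub_lt (by omega) Nat.one_pos⟩) : Fin k × Fin m) := by
  rintro ⟨-, h⟩
  simp only at h
  omega

lemma cost_R0 (hk : 2 ≤ k) (hm : 3 ≤ m) {H : ℝ} (hH : 2 ≤ H) :
    kmedCost (dd k m H) (R0 k m (by omega)) = ((k : ℝ) - 1) * H := by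
  have hm0 : 0 < m := by omega
  unfold kmedCost
  have hpt : ∀ v : Fin k × Fin m,
      sInf (dd k m H v '' ↑(R0 k m hm0))
        = if v.1.val < k - 1 ∧ v.2.val = 0 then H else 0 := by
    intro v
    by_cases hv : sing k v
    · rw [if_pos (show v.1.val < k - 1 ∧ v.2.val = 0 from hv)]
      have hall : ∀ r ∈ R0 k m hm0, dd k m H v r = H := by
        intro r hr
        rw [R0, Finset.mem_image] at hr
        obtain ⟨i, -, rfl⟩ := hr
        have hns : ¬ sing k ((i, ⟨m - 1, Nat.sub_lt hm0 Nat.one_pos⟩) : Fin k × Fin m) := by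
          rintro ⟨-, h⟩; simp only at h; omega
        unfold dd
        rw [if_neg (by rintro ⟨-, hiff⟩; exact hns (hiff.mp hv)),
          if_neg (by rintro ⟨hnp, -⟩; exact hnp hv)]
      apply le_antisymm
      · calc sInf (dd k m H v '' ↑(R0 k m hm0))
            ≤ dd k m H v (v.1, ⟨m - 1, Nat.sub_lt hm0 Nat.one_pos⟩) :=
              pt_le (by rw [R0, Finset.mem_image]; exact ⟨v.1, Finset.mem_univ _, rfl⟩)
          _ = H := hall _ (by rw [R0, Finset.mem_image]; exact ⟨v.1, Finset.mem_univ _, rfl⟩)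
      · exact le_pt (R0_nonempty (by omega) hm0) fun r hr => (hall r hr).ge
    · rw [if_neg (show ¬(v.1.val < k - 1 ∧ v.2.val = 0) from hv)]
      have hmem : (v.1, (⟨m - 1, Nat.sub_lt hm0 Nat.one_pos⟩ : Fin m)) ∈ R0 k m hm0 := by
        rw [R0, Finset.mem_image]; exact ⟨v.1, Finset.mem_univ _, rfl⟩
      refine pt_eq_zero (by linarith) hmem ?_
      have hns : ¬ sing k ((v.1, ⟨m - 1, Nat.sub_lt hm0 Nat.one_pos⟩) : Fin k × Fin m) := by
        rintro ⟨-, h⟩; simp only at h; omega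
      exact if_pos ⟨rfl, iff_of_false hv hns⟩
  rw [Finset.sum_congr rfl fun v _ => hpt v, sum_sing (by omega) hm0 H,
    nsmul_eq_mul, Nat.cast_sub (by omega : 1 ≤ k), Nat.cast_one]

lemma cost_R1 (hk : 2 ≤ k) (hm : 3 ≤ m) {H : ℝ} (hH : 2 ≤ H) :
    kmedCost (dd k m H) (R1 k m (by omega)) = ((k : ℝ) - 1) * ((m : ℝ) - 1) := by
  have hm0 : 0 < m := by omega
  unfold kmedCost
  have hpt : ∀ v : Fin k × Fin m,
      sInf (dd k m H v '' ↑(R1 k m hm0))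
        = if v.1.val < k - 1 ∧ v.2.val ≠ 0 then 1 else 0 := by
    intro v
    by_cases hv1 : v.1.val < k - 1
    · by_cases hv2 : v.2.val = 0
      · -- v is a singleton, and v ∈ R1
        rw [if_neg (by tauto)]
        have hveq : v = (v.1, (⟨0, hm0⟩ : Fin m)) :=
          Prod.ext_iff.mpr ⟨rfl, Fin.ext hv2⟩
        have hmem : v ∈ R1 k m hm0 := by
          rw [R1, Finset.mem_image]
          exact ⟨v.1, Finset.mem_univ _, hveq.symm⟩
        exact pt_eq_zero (by linarith) hmem (dd_self H v)
      · -- v is a blob point of a small blob: distance 1 to the big blob rep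
        rw [if_pos ⟨hv1, hv2⟩]
        have hnv : ¬ sing k v := by rintro ⟨-, h⟩; exact hv2 h
        have hge : ∀ r ∈ R1 k m hm0, (1 : ℝ) ≤ dd k m H v r := by
          intro r hr
          rw [R1, Finset.mem_image] at hr
          obtain ⟨a, -, rfl⟩ := hr
          unfold dd
          split_ifs with hA hB
          · exfalso
            obtain ⟨hfst, hiff⟩ := hA
            have : ¬ sing k ((a, ⟨0, hm0⟩) : Fin k × Fin m) := fun hs => hnv (hiff.mpr hs)
            apply this
            refine ⟨?_, rfl⟩
            exact hfst ▸ hv1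
          · norm_num
          · linarith
        apply le_antisymm
        · have hlast : (k - 1 : ℕ) < k := by omega
          have hmem : ((⟨k - 1, hlast⟩ : Fin k), (⟨0, hm0⟩ : Fin m)) ∈ R1 k m hm0 := by
            rw [R1, Finset.mem_image]; exact ⟨_, Finset.mem_univ _, rfl⟩
          have hval : dd k m H v ((⟨k - 1, hlast⟩ : Fin k), (⟨0, hm0⟩ : Fin m)) = 1 := by
            unfold dd
            rw [if_neg, if_pos]
            · constructor
              · exact hnv
              · rintro ⟨h, -⟩; simp only at h; omega
            · rintro ⟨hfst, -⟩
              have : v.1.val = k - 1 := by rw [hfst]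
              omega
          calc sInf (dd k m H v '' ↑(R1 k m hm0)) ≤ _ := pt_le hmem
            _ = 1 := hval
        · exact le_pt (R1_nonempty (by omega) hm0) hge
    · -- v is in the big blob: distance 0 to the big blob rep
      rw [if_neg (by tauto)]
      have hmem : (v.1, (⟨0, hm0⟩ : Fin m)) ∈ R1 k m hm0 := by
        rw [R1, Finset.mem_image]; exact ⟨v.1, Finset.mem_univ _, rfl⟩
      refine pt_eq_zero (by linarith) hmem ?_
      apply if_pos
      refine ⟨rfl, iff_of_false (fun hs => hv1 hs.1) ?_⟩
      rintro ⟨h, -⟩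
      exact hv1 h
  rw [Finset.sum_congr rfl fun v _ => hpt v, sum_blob (by omega) hm0 (1 : ℝ)]
  rw [nsmul_eq_mul, mul_one, Nat.cast_mul, Nat.cast_sub (by omega : 1 ≤ k),
    Nat.cast_sub (by omega : 1 ≤ m), Nat.cast_one]


/-! ### Main lower bound -/

/-- The set of blob groups covered by `R`. -/
def covered (k m : ℕ) (R : Finset (Fin k × Fin m)) : Finset (Fin k) :=
  (R.filter fun p => ¬ sing k p).image Prod.fst

lemma cost_lb (hk : 2 ≤ k) (hm : 3 ≤ m) {H : ℝ} (hH : 2 ≤ H)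
    (R : Finset (Fin k × Fin m)) (hR : R.Nonempty) :
    H * (((univ.filter (sing k)) \ R).card : ℝ)
      + (((covered k m R)ᶜ.card : ℝ)) * ((m : ℝ) - 1)
      ≤ kmedCost (dd k m H) R := by
  have hm0 : 0 < m := by omega
  set Ws : Finset (Fin k × Fin m) := (univ.filter (sing k)) \ R with hWsdef
  set Wb : Finset (Fin k × Fin m) :=
    (covered k m R)ᶜ ×ˢ (univ.filter fun j : Fin m => ¬ (j : ℕ) = 0) with hWbdef
  have hWs : ∀ v ∈ Ws, H ≤ sInf (dd k m H v '' ↑R) := by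
    intro v hv
    rw [hWsdef, Finset.mem_sdiff, Finset.mem_filter] at hv
    obtain ⟨⟨-, hsv⟩, hvR⟩ := hv
    refine le_pt hR fun r hr => ?_
    have : dd k m H v r = H := by
      unfold dd
      rw [if_neg, if_neg]
      · rintro ⟨hnp, -⟩; exact hnp hsv
      · rintro ⟨hfst, hiff⟩
        have hsr := hiff.mp hsv
        have : r = v := by
          refine Prod.ext_iff.mpr ⟨hfst.symm, Fin.ext ?_⟩
          rw [hsr.2, hsv.2]
        exact hvR (this ▸ hr)
    linarith [this.ge]
  have hWb : ∀ v ∈ Wb, (1 : ℝ) ≤ sInf (dd k m H v '' ↑R) := by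
    intro v hv
    rw [hWbdef, Finset.mem_product, Finset.mem_compl] at hv
    obtain ⟨hv1, hv2⟩ := hv
    rw [Finset.mem_filter] at hv2
    have hnv : ¬ sing k v := fun hs => hv2.2 hs.2
    refine le_pt hR fun r hr => ?_
    unfold dd
    split_ifs with hA hB
    · exfalso
      obtain ⟨hfst, hiff⟩ := hA
      have hnr : ¬ sing k r := fun hs => hnv (hiff.mpr hs)
      apply hv1
      rw [covered]
      apply Finset.mem_image.mpr
      exact ⟨r, Finset.mem_filter.mpr ⟨hr, hnr⟩, hfst.symm⟩
    · norm_num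
    · linarith
  have hdisj : Disjoint Ws Wb := by
    rw [Finset.disjoint_left]
    intro a ha hb
    rw [hWsdef, Finset.mem_sdiff, Finset.mem_filter] at ha
    rw [hWbdef, Finset.mem_product, Finset.mem_filter] at hb
    exact hb.2.2 ha.1.2.2
  have hcardWb : (Wb.card : ℝ) = ((covered k m R)ᶜ.card : ℝ) * ((m : ℝ) - 1) := by
    rw [hWbdef, Finset.card_product, card_ne_zero_filter hm0]
    push_cast [Nat.cast_sub (by omega : 1 ≤ m)]
    ring
  calc H * (Ws.card : ℝ) + (((covered k m R)ᶜ.card : ℝ)) * ((m : ℝ) - 1)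
      = (∑ _v ∈ Ws, H) + (∑ _v ∈ Wb, (1 : ℝ)) := by
        rw [Finset.sum_const, Finset.sum_const, nsmul_eq_mul, nsmul_eq_mul,
          mul_one, ← hcardWb.symm]
        ring
    _ ≤ (∑ v ∈ Ws, sInf (dd k m H v '' ↑R)) + (∑ v ∈ Wb, sInf (dd k m H v '' ↑R)) :=
        add_le_add (Finset.sum_le_sum hWs) (Finset.sum_le_sum hWb)
    _ = ∑ v ∈ Ws ∪ Wb, sInf (dd k m H v '' ↑R) := (Finset.sum_union hdisj).symm
    _ ≤ ∑ v ∈ (univ : Finset (Fin k × Fin m)), sInf (dd k m H v '' ↑R) :=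
        Finset.sum_le_sum_of_subset_of_nonneg (Finset.subset_univ _)
          (fun v _ _ => pt_nonneg (by linarith) R v)
    _ = kmedCost (dd k m H) R := rfl

/-- counting facts about an arbitrary `R`. -/
lemma count_facts (hk : 2 ≤ k) (hm : 3 ≤ m) (R : Finset (Fin k × Fin m)) :
    k - 1 ≤ ((univ.filter (sing k)) \ R).card + (R.filter (sing k)).card ∧
    (covered k m R).card + (R.filter (sing k)).card ≤ R.card ∧
    (covered k m R)ᶜ.card = k - (covered k m R).card := by
  have hm0 : 0 < m := by omega
  refine ⟨?_, ?_, ?_⟩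
  · have h1 : (univ.filter (sing k)) = ((univ.filter (sing k)) \ R) ∪
        ((univ.filter (sing k)) ∩ R) := (Finset.sdiff_union_inter _ _).symm
    have h2 : ((univ.filter (sing k)) ∩ R).card ≤ (R.filter (sing k)).card := by
      apply Finset.card_le_card
      intro v hv
      rw [Finset.mem_inter, Finset.mem_filter] at hv
      exact Finset.mem_filter.mpr ⟨hv.2, hv.1.2⟩
    calc k - 1 = (univ.filter (sing k)).card := (card_sing_filter (by omega) hm0).symm
      _ ≤ ((univ.filter (sing k)) \ R).card + ((univ.filter (sing k)) ∩ R).card := by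
          conv_lhs => rw [h1]
          exact Finset.card_union_le _ _
      _ ≤ _ := by omega
  · have h1 : (covered k m R).card ≤ (R.filter fun p => ¬ sing k p).card :=
      Finset.card_image_le
    have h2 : (R.filter (sing k)).card + (R.filter fun p => ¬ sing k p).card = R.card :=
      Finset.card_filter_add_card_filter_not _
    omega
  · rw [Finset.card_compl, Fintype.card_fin]

lemma opt_d_eq (hk : 2 ≤ k) (hm : 3 ≤ m) :
    kmedOpt (dd k m 2) k = 2 * ((k : ℝ) - 1) := by
  have hm0 : 0 < m := by omega
  have hlb : ∀ c ∈ {c : ℝ | ∃ R : Finset (Fin k × Fin m), R.card = k ∧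
      c = kmedCost (dd k m 2) R}, 2 * ((k : ℝ) - 1) ≤ c := by
    rintro c ⟨R, hcard, rfl⟩
    have hR : R.Nonempty := Finset.card_pos.mp (by omega)
    have hmain := cost_lb hk hm (le_refl (2 : ℝ)) R hR
    obtain ⟨f1, f2, f3⟩ := count_facts hk hm R
    set w := ((univ.filter (sing k)) \ R).card
    set s := (R.filter (sing k)).card
    set cc := (covered k m R)ᶜ.card
    have hccs : s ≤ cc := by omega
    have c1 : (k : ℝ) - 1 ≤ (w : ℝ) + (s : ℝ) := by
      have : ((k - 1 : ℕ) : ℝ) ≤ ((w + s : ℕ) : ℝ) := Nat.cast_le.mpr f1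
      push_cast [Nat.cast_sub (by omega : 1 ≤ k)] at this
      linarith
    have c2 : (s : ℝ) ≤ (cc : ℝ) := Nat.cast_le.mpr hccs
    have hs0 : (0 : ℝ) ≤ (s : ℝ) := Nat.cast_nonneg _
    have hmR : (3 : ℝ) ≤ (m : ℝ) := by exact_mod_cast hm
    nlinarith [hmain, mul_le_mul c2 (by linarith : (2 : ℝ) ≤ (m : ℝ) - 1)
      (by norm_num) (Nat.cast_nonneg cc)]
  apply le_antisymm
  · have hmem : kmedCost (dd k m 2) (R0 k m hm0) ∈
        {c : ℝ | ∃ R : Finset (Fin k × Fin m), R.card = k ∧ c = kmedCost (dd k m 2) R} :=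
      ⟨R0 k m hm0, R0_card hm0, rfl⟩
    have := csInf_le ⟨2 * ((k : ℝ) - 1), hlb⟩ hmem
    rw [cost_R0 hk hm (le_refl (2 : ℝ))] at this
    calc kmedOpt (dd k m 2) k ≤ ((k : ℝ) - 1) * 2 := this
      _ = 2 * ((k : ℝ) - 1) := by ring
  · exact le_csInf ⟨_, R0 k m hm0, R0_card hm0, rfl⟩ hlb

lemma opt_d'_eq (hk : 2 ≤ k) (hm : 3 ≤ m) {H : ℝ} (hH : 2 ≤ H)
    (hHbig : ((k : ℝ) - 1) * ((m : ℝ) - 1) ≤ H) :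
    kmedOpt (dd k m H) k = ((k : ℝ) - 1) * ((m : ℝ) - 1) := by
  have hm0 : 0 < m := by omega
  have hlb : ∀ c ∈ {c : ℝ | ∃ R : Finset (Fin k × Fin m), R.card = k ∧
      c = kmedCost (dd k m H) R}, ((k : ℝ) - 1) * ((m : ℝ) - 1) ≤ c := by
    rintro c ⟨R, hcard, rfl⟩
    have hR : R.Nonempty := Finset.card_pos.mp (by omega)
    by_cases hsub : (univ.filter (sing k)) ⊆ R
    · -- all singletons covered: at most one blob group covered
      have hmain := cost_lb hk hm hH R hR
      obtain ⟨f1, f2, f3⟩ := count_facts hk hm R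
      have hseq : (R.filter (sing k)).card = k - 1 := by
        have : (univ.filter (sing k)) ⊆ R.filter (sing k) := by
          intro v hv
          rw [Finset.mem_filter] at hv ⊢
          exact ⟨hsub (Finset.mem_filter.mpr hv), hv.2⟩
        have h2 : R.filter (sing k) ⊆ univ.filter (sing k) := by
          intro v hv
          rw [Finset.mem_filter] at hv ⊢
          exact ⟨Finset.mem_univ _, hv.2⟩
        have := Finset.Subset.antisymm h2 this
        rw [this, card_sing_filter (by omega) hm0]
      have hcc : k - 1 ≤ (covered k m R)ᶜ.card := by omega
      have hcR : ((k - 1 : ℕ) : ℝ) ≤ ((covered k m R)ᶜ.card : ℝ) := Nat.cast_le.mpr hcc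
      push_cast [Nat.cast_sub (by omega : 1 ≤ k)] at hcR
      have hw0 : (0 : ℝ) ≤ (((univ.filter (sing k)) \ R).card : ℝ) := Nat.cast_nonneg _
      have hmR : (3 : ℝ) ≤ (m : ℝ) := by exact_mod_cast hm
      nlinarith [hmain, mul_le_mul_of_nonneg_right hcR (by linarith : (0:ℝ) ≤ (m:ℝ) - 1)]
    · -- some singleton uncovered: cost at least H
      obtain ⟨v, hv, hvR⟩ := Finset.not_subset.mp hsub
      rw [Finset.mem_filter] at hv
      have hterm : H ≤ sInf (dd k m H v '' ↑R) := by
        refine le_pt hR fun r hr => ?_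
        have : dd k m H v r = H := by
          unfold dd
          rw [if_neg, if_neg]
          · rintro ⟨hnp, -⟩; exact hnp hv.2
          · rintro ⟨hfst, hiff⟩
            have hsr := hiff.mp hv.2
            have : r = v := by
              refine Prod.ext_iff.mpr ⟨hfst.symm, Fin.ext ?_⟩
              rw [hsr.2, hv.2.2]
            exact hvR (this ▸ hr)
        linarith [this.ge]
      have hsum : sInf (dd k m H v '' ↑R) ≤ kmedCost (dd k m H) R :=
        Finset.single_le_sum (fun i _ => pt_nonneg (by linarith) R i) (Finset.mem_univ v)
      linarith
  apply le_antisymm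
  · have hmem : kmedCost (dd k m H) (R1 k m hm0) ∈
        {c : ℝ | ∃ R : Finset (Fin k × Fin m), R.card = k ∧ c = kmedCost (dd k m H) R} :=
      ⟨R1 k m hm0, R1_card hm0, rfl⟩
    have := csInf_le ⟨((k : ℝ) - 1) * ((m : ℝ) - 1), hlb⟩ hmem
    rwa [cost_R1 hk hm hH] at this
  · exact le_csInf ⟨_, R1 k m hm0, R1_card hm0, rfl⟩ hlb

lemma final_dichotomy (hk : 2 ≤ k) (hm : 3 ≤ m) {H : ℝ} (hH : 2 ≤ H)
    (R : Finset (Fin k × Fin m)) (hR : R.Nonempty) (hcard : R.card ≤ 2 * k - 2) :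
    ((m : ℝ) - 1) ≤ kmedCost (dd k m 2) R ∨ H ≤ kmedCost (dd k m H) R := by
  have hm0 : 0 < m := by omega
  by_cases hsub : (univ.filter (sing k)) ⊆ R
  · left
    have hmain := cost_lb hk hm (le_refl (2 : ℝ)) R hR
    obtain ⟨f1, f2, f3⟩ := count_facts hk hm R
    have hseq : k - 1 ≤ (R.filter (sing k)).card := by
      have : (univ.filter (sing k)) ⊆ R.filter (sing k) := by
        intro v hv
        rw [Finset.mem_filter] at hv ⊢
        exact ⟨hsub (Finset.mem_filter.mpr hv), hv.2⟩
      calc k - 1 = (univ.filter (sing k)).card := (card_sing_filter (by omega) hm0).symm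
        _ ≤ _ := Finset.card_le_card this
    have hcc : 1 ≤ (covered k m R)ᶜ.card := by omega
    have hcR : (1 : ℝ) ≤ ((covered k m R)ᶜ.card : ℝ) := by exact_mod_cast hcc
    have hw0 : (0 : ℝ) ≤ (((univ.filter (sing k)) \ R).card : ℝ) := Nat.cast_nonneg _
    have hmR : (3 : ℝ) ≤ (m : ℝ) := by exact_mod_cast hm
    nlinarith [hmain, mul_le_mul_of_nonneg_right hcR (by linarith : (0:ℝ) ≤ (m:ℝ) - 1)]
  · right
    obtain ⟨v, hv, hvR⟩ := Finset.not_subset.mp hsub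
    rw [Finset.mem_filter] at hv
    have hterm : H ≤ sInf (dd k m H v '' ↑R) := by
      refine le_pt hR fun r hr => ?_
      have : dd k m H v r = H := by
        unfold dd
        rw [if_neg, if_neg]
        · rintro ⟨hnp, -⟩; exact hnp hv.2
        · rintro ⟨hfst, hiff⟩
          have hsr := hiff.mp hv.2
          have : r = v := by
            refine Prod.ext_iff.mpr ⟨hfst.symm, Fin.ext ?_⟩
            rw [hsr.2, hv.2.2]
          exact hvR (this ▸ hr)
      linarith [this.ge]
    have hsum : sInf (dd k m H v '' ↑R) ≤ kmedCost (dd k m H) R :=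
      Finset.single_le_sum (fun i _ => pt_nonneg (by linarith) R i) (Finset.mem_univ v)
    linarith


end S5

/-- There exist an `n`-point set `V` and two pseudometrics `d`, `d'` on `V`
inducing the same ordering of pairwise distances, with
`opt_d(k) = 2(k−1)` and `opt_{d'}(k) = (k−1)(n/k−1) ≤ n`, such that every
nonempty subset `R ⊆ V` with `|R| ≤ 2k−2` satisfies `COST_d(R) ≥ n/k − 1` or
`COST_{d'}(R) ≥ n³ ≥ n² · opt_{d'}(k)`. -/
theorem stmt5 (n k : ℕ) (hk : 2 ≤ k) (hdvd : k ∣ n) (hnk : 3 ≤ n / k) :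
    ∃ (V : Type) (inst : Fintype V) (d d' : V → V → ℝ),
      @Fintype.card V inst = n ∧
      (∀ a, d a a = 0) ∧ (∀ a b, d a b = d b a) ∧
      (∀ a b c, d a c ≤ d a b + d b c) ∧
      (∀ a, d' a a = 0) ∧ (∀ a b, d' a b = d' b a) ∧
      (∀ a b c, d' a c ≤ d' a b + d' b c) ∧
      (∀ a b c e : V, d a b ≤ d c e ↔ d' a b ≤ d' c e) ∧
      @kmedOpt V inst d k = 2 * ((k : ℝ) - 1) ∧
      @kmedOpt V inst d' k = ((k : ℝ) - 1) * (((n / k : ℕ) : ℝ) - 1) ∧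
      @kmedOpt V inst d' k ≤ (n : ℝ) ∧
      (∀ R : Finset V, R.Nonempty → R.card ≤ 2 * k - 2 →
        ((n / k : ℕ) : ℝ) - 1 ≤ @kmedCost V inst d R ∨
        ((n : ℝ) ^ 3 ≤ @kmedCost V inst d' R ∧
          (n : ℝ) ^ 2 * @kmedOpt V inst d' k ≤ (n : ℝ) ^ 3)) := by
  set m := n / k with hmdef
  have hm : 3 ≤ m := hnk
  have hn : k * m = n := Nat.mul_div_cancel' hdvd
  have hm0 : 0 < m := by omega
  have hn6 : 6 ≤ n := by
    have : 2 * 3 ≤ k * m := Nat.mul_le_mul hk hm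
    omega
  have hnR : (6 : ℝ) ≤ (n : ℝ) := by exact_mod_cast hn6
  have hcube : (6 : ℝ) ^ 3 ≤ (n : ℝ) ^ 3 := pow_le_pow_left₀ (by norm_num) hnR 3
  have hH : (2 : ℝ) ≤ (n : ℝ) ^ 3 := by norm_num at hcube; linarith
  have hkR : (2 : ℝ) ≤ (k : ℝ) := by exact_mod_cast hk
  have hmR : (3 : ℝ) ≤ (m : ℝ) := by exact_mod_cast hm
  have hnkm : (n : ℝ) = (k : ℝ) * (m : ℝ) := by exact_mod_cast hn.symm
  have hkm : ((k : ℝ) - 1) * ((m : ℝ) - 1) ≤ (n : ℝ) := by nlinarith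
  have hsq : (1 : ℝ) ≤ (n : ℝ) ^ 2 := by nlinarith
  have hn3 : (n : ℝ) ≤ (n : ℝ) ^ 3 := by
    nlinarith [mul_le_mul_of_nonneg_left hsq (by linarith : (0 : ℝ) ≤ (n : ℝ))]
  have hHbig : ((k : ℝ) - 1) * ((m : ℝ) - 1) ≤ (n : ℝ) ^ 3 := hkm.trans hn3
  have hopt' := S5.opt_d'_eq hk hm hH hHbig
  refine ⟨Fin k × Fin m, inferInstance, S5.dd k m 2, S5.dd k m ((n : ℝ) ^ 3),
    ?_, S5.dd_self 2, S5.dd_symm 2, S5.dd_triangle (by norm_num),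
    S5.dd_self _, S5.dd_symm _, S5.dd_triangle hH,
    S5.dd_order 2 _ (by norm_num) hH, S5.opt_d_eq hk hm, hopt', ?_, ?_⟩
  · simp [hn]
  · rw [hopt']
    exact hkm
  · intro R hne hcard
    rcases S5.final_dichotomy hk hm hH R hne hcard with h | h
    · exact Or.inl h
    · refine Or.inr ⟨h, ?_⟩
      rw [hopt']
      have h2 := mul_le_mul_of_nonneg_left hkm (by positivity : (0 : ℝ) ≤ (n : ℝ) ^ 2)
      nlinarith
end

section
/- Let r be a positive integer, L ≥ 4 a real, and n_1, …, n_r positive reals satisfying n_{i+1} ≤ (3/4)·n_i for all 1 ≤ i < r. Let B_1, …, B_r be pairwise-disjoint finite subsets of a set Z, and let G_1, …, G_r be finite subsets of Z such that |B_i| ≤ n_i/(100L) and |G_i| ≥ n_i/100 for every i. Then there exists an injective map ψ : B_1 ∪ ⋯ ∪ B_r → G_1 ∪ ⋯ ∪ G_r such that ψ(b) ∈ G_i whenever b ∈ B_i. -/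
/-!
Each bad vertex of round `i` may be sent to any vertex of `G i`, and we check Hall's condition.
A set of bad vertices whose earliest round is `i` lies in the rounds `j ≥ i`, whose bad sets have
total size at most `∑_{j ≥ i} n_j / (100 L) ≤ 4 n_i / (100 L) ≤ n_i / 100 ≤ |G_i|` by the
geometric decay of the `n_j`.
-/

open Finset

theorem exists_injOn_biUnion_of_sum_card_le {ι Z : Type*} [LinearOrder ι] [DecidableEq Z]
    {s : Finset ι} {B G : ι → Finset Z}
    (hdisj : (s : Set ι).PairwiseDisjoint B)
    (hcard : ∀ i ∈ s, ∑ j ∈ s with i ≤ j, #(B j) ≤ #(G i)) :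
    ∃ ψ : Z → Z, Set.InjOn ψ ↑(s.biUnion B) ∧ ∀ i ∈ s, ∀ b ∈ B i, ψ b ∈ G i := by
  have hround : ∀ b : s.biUnion B, ∃ i ∈ s, (b : Z) ∈ B i := fun b => mem_biUnion.mp b.2
  choose round hround_mem hmem_round using hround
  obtain ⟨f, hf_inj, hf_mem⟩ :=
    (all_card_le_biUnion_card_iff_exists_injective fun b => G (round b)).mp fun T => by
      rcases T.eq_empty_or_nonempty with rfl | hT
      · simp
      obtain ⟨b₀, hb₀, hmin⟩ := T.exists_min_image round hT
      calc #T = #(T.map (Function.Embedding.subtype _)) := (card_map _).symm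
        _ ≤ #((s.filter (round b₀ ≤ ·)).biUnion B) := card_le_card fun z hz => by
            obtain ⟨b, hb, rfl⟩ := mem_map.mp hz
            exact mem_biUnion.mpr
              ⟨round b, mem_filter.mpr ⟨hround_mem b, hmin b hb⟩, hmem_round b⟩
        _ ≤ ∑ j ∈ s with round b₀ ≤ j, #(B j) := card_biUnion_le
        _ ≤ #(G (round b₀)) := hcard _ (hround_mem b₀)
        _ ≤ #(T.biUnion fun b => G (round b)) :=
            card_le_card (subset_biUnion_of_mem (fun b => G (round b)) hb₀)
  refine ⟨fun z => if h : z ∈ s.biUnion B then f ⟨z, h⟩ else z, ?_, ?_⟩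
  · intro x hx y hy hxy
    rw [mem_coe] at hx hy
    simp only [hx, hy, dite_true] at hxy
    exact congrArg Subtype.val (hf_inj hxy)
  · intro i hi b hb
    have hbU : b ∈ s.biUnion B := mem_biUnion.mpr ⟨i, hi, hb⟩
    have hround_eq : round ⟨b, hbU⟩ = i :=
      hdisj.elim (hround_mem _) hi (not_disjoint_iff.mpr ⟨b, hmem_round _, hb⟩)
    simpa [hbU, hround_eq] using hf_mem ⟨b, hbU⟩

theorem sum_Ico_le_div_one_sub_of_succ_le_mul {a : ℕ → ℝ} {c : ℝ} {r : ℕ}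
    (hc₀ : 0 ≤ c) (hc₁ : c < 1)
    (ha : ∀ i < r, 0 ≤ a i) (hdec : ∀ i, i + 1 < r → a (i + 1) ≤ c * a i) :
    ∀ i < r, ∑ j ∈ Ico i r, a j ≤ a i / (1 - c) := by
  have hc : 0 < 1 - c := sub_pos.mpr hc₁
  intro i hi
  induction hk : r - i generalizing i with
  | zero => omega
  | succ k ih =>
    rw [sum_eq_sum_Ico_succ_bot hi]
    rcases lt_or_ge (i + 1) r with hi' | hi'
    · calc a i + ∑ j ∈ Ico (i + 1) r, a j ≤ a i + a (i + 1) / (1 - c) :=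
            add_le_add_right (ih (i + 1) hi' (by omega)) _
        _ ≤ a i + c * a i / (1 - c) := by gcongr; exact hdec i hi'
        _ = a i / (1 - c) := by field_simp; ring
    · rw [Ico_eq_empty_of_le hi', sum_empty, add_zero]
      exact le_div_self (ha i hi) hc (by linarith)

theorem stmt6_general {Z : Type*} [DecidableEq Z] (r : ℕ)
    (L : ℝ) (hL : 4 ≤ L)
    (nn : ℕ → ℝ)
    (hdec : ∀ i, i + 1 < r → nn (i + 1) ≤ (3 / 4) * nn i)
    (B G : ℕ → Finset Z)
    (hdisj : ∀ i < r, ∀ j < r, i ≠ j → Disjoint (B i) (B j))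
    (hB : ∀ i < r, ((B i).card : ℝ) ≤ nn i / (100 * L))
    (hG : ∀ i < r, nn i / 100 ≤ ((G i).card : ℝ)) :
    ∃ ψ : Z → Z,
      Set.InjOn ψ ↑((Finset.range r).biUnion B) ∧
      ∀ i < r, ∀ b ∈ B i, ψ b ∈ G i := by
  have hL₀ : 0 < 100 * L := by linarith
  have hnn : ∀ i < r, 0 ≤ nn i := fun i hi => by
    simpa using (le_div_iff₀ hL₀).mp ((Nat.cast_nonneg _).trans (hB i hi))
  have htail := sum_Ico_le_div_one_sub_of_succ_le_mul (by norm_num) (by norm_num) hnn hdec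
  have hcard : ∀ i ∈ range r, ∑ j ∈ range r with i ≤ j, #(B j) ≤ #(G i) := by
    intro i hi
    rw [mem_range] at hi
    have hIco : (range r).filter (i ≤ ·) = Ico i r := by
      ext
      simp only [mem_filter, mem_range, mem_Ico]
      omega
    rw [hIco]
    exact_mod_cast calc
      (∑ j ∈ Ico i r, #(B j) : ℝ) ≤ ∑ j ∈ Ico i r, nn j / (100 * L) :=
          sum_le_sum fun j hj => hB j (mem_Ico.mp hj).2
      _ = (∑ j ∈ Ico i r, nn j) / (100 * L) := (sum_div _ _ _).symm
      _ ≤ nn i / (1 - 3 / 4) / (100 * L) := by gcongr; exact htail i hi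
      _ ≤ nn i / 100 := by
          rw [div_div, div_le_div_iff₀ (mul_pos (by norm_num) hL₀) (by norm_num)]
          nlinarith [hnn i hi]
      _ ≤ #(G i) := hG i hi
  obtain ⟨ψ, hinj, hmem⟩ := exists_injOn_biUnion_of_sum_card_le
    (fun i hi j hj hij => hdisj i (mem_range.mp hi) j (mem_range.mp hj) hij) hcard
  exact ⟨ψ, hinj, fun i hi => hmem i (mem_range.mpr hi)⟩

/-- Good-mapping lemma: let `r ≥ 1`, `L ≥ 4`, and `n_0, …, n_{r-1}` positive
reals with `n_{i+1} ≤ (3/4)·n_i`. Let `B_0, …, B_{r-1}` be pairwise-disjoint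
finite subsets of `Z` and `G_0, …, G_{r-1}` finite subsets of `Z` with
`|B_i| ≤ n_i/(100L)` and `|G_i| ≥ n_i/100` for each `i < r`. Then there is an
injective map `ψ` from `B_0 ∪ ⋯ ∪ B_{r-1}` to `G_0 ∪ ⋯ ∪ G_{r-1}` with
`ψ(b) ∈ G_i` whenever `b ∈ B_i`. -/
theorem stmt6 {Z : Type*} [DecidableEq Z] (r : ℕ) (hr : 1 ≤ r)
    (L : ℝ) (hL : 4 ≤ L)
    (nn : ℕ → ℝ) (hpos : ∀ i < r, 0 < nn i)
    (hdec : ∀ i, i + 1 < r → nn (i + 1) ≤ (3 / 4) * nn i)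
    (B G : ℕ → Finset Z)
    (hdisj : ∀ i < r, ∀ j < r, i ≠ j → Disjoint (B i) (B j))
    (hB : ∀ i < r, ((B i).card : ℝ) ≤ nn i / (100 * L))
    (hG : ∀ i < r, nn i / 100 ≤ ((G i).card : ℝ)) :
    ∃ ψ : Z → Z,
      Set.InjOn ψ ↑((Finset.range r).biUnion B) ∧
      ∀ i < r, ∀ b ∈ B i, ψ b ∈ G i :=
  stmt6_general r L hL nn hdec B G hdisj hB hG
end

section
/- Let (M,d) be a metric space, s ∈ M, and let δ > 0, L ≥ 1, m > 0 be reals. Let T be a finite index family with |T| ≤ L, and for each t ∈ T let B_t ⊆ M be a finite set with |B_t| ≤ δm/(1000 L²); let B* ⊆ M be a finite set with |B*| ≥ m/(100 L). If d(s,v') ≤ 4·d(s,v) for every t ∈ T, every v' ∈ B_t and every v ∈ B*, then Σ_{t∈T} Σ_{v'∈B_t} d(s,v') ≤ δ · Σ_{v∈B*} d(s,v). -/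
/-- Light-versus-heavy bucket lemma: let `(M,d)` be a metric space, `s ∈ M`,
`δ > 0`, `L ≥ 1`, `m > 0`. Let `T` be a finite index family with `|T| ≤ L`,
and for each `t ∈ T` let `B_t ⊆ M` be finite with `|B_t| ≤ δm/(1000L²)`; let
`B* ⊆ M` be finite with `|B*| ≥ m/(100L)`. If `d(s,v') ≤ 4·d(s,v)` for every
`t ∈ T`, `v' ∈ B_t`, `v ∈ B*`, then
`Σ_{t∈T} Σ_{v'∈B_t} d(s,v') ≤ δ · Σ_{v∈B*} d(s,v)`. -/
theorem stmt7 {M : Type*} [MetricSpace M] (s : M)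
    (δ L m : ℝ) (hδ : 0 < δ) (hL : 1 ≤ L) (hm : 0 < m)
    {ι : Type*} (T : Finset ι) (hT : (T.card : ℝ) ≤ L)
    (B : ι → Finset M)
    (hB : ∀ t ∈ T, ((B t).card : ℝ) ≤ δ * m / (1000 * L ^ 2))
    (Bstar : Finset M) (hBstar : m / (100 * L) ≤ (Bstar.card : ℝ))
    (hcmp : ∀ t ∈ T, ∀ v' ∈ B t, ∀ v ∈ Bstar, dist s v' ≤ 4 * dist s v) :
    ∑ t ∈ T, ∑ v' ∈ B t, dist s v' ≤ δ * ∑ v ∈ Bstar, dist s v := by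
  have hLpos : (0:ℝ) < L := lt_of_lt_of_le one_pos hL
  have hcpos : (0:ℝ) < (Bstar.card : ℝ) :=
    lt_of_lt_of_le (by positivity) hBstar
  set S := ∑ v ∈ Bstar, dist s v with hS
  have hSnn : 0 ≤ S := Finset.sum_nonneg fun v _ => dist_nonneg
  set c := (Bstar.card : ℝ)
  -- each light distance is ≤ 4 S / c
  have key : ∀ t ∈ T, ∀ v' ∈ B t, dist s v' ≤ 4 * S / c := by
    intro t ht v' hv'
    rw [le_div_iff₀ hcpos]
    calc dist s v' * c = ∑ v ∈ Bstar, dist s v' := by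
          rw [Finset.sum_const, nsmul_eq_mul, mul_comm]
      _ ≤ ∑ v ∈ Bstar, 4 * dist s v :=
          Finset.sum_le_sum fun v hv => hcmp t ht v' hv' v hv
      _ = 4 * S := by rw [hS, Finset.mul_sum]
  have hstep : ∑ t ∈ T, ∑ v' ∈ B t, dist s v'
      ≤ ∑ t ∈ T, ((B t).card : ℝ) * (4 * S / c) := by
    refine Finset.sum_le_sum fun t ht => ?_
    calc ∑ v' ∈ B t, dist s v' ≤ ∑ _v' ∈ B t, (4 * S / c) :=
          Finset.sum_le_sum fun v' hv' => key t ht v' hv'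
      _ = ((B t).card : ℝ) * (4 * S / c) := by
          rw [Finset.sum_const, nsmul_eq_mul]
  have hdivnn : 0 ≤ 4 * S / c := by positivity
  have hstep2 : ∑ t ∈ T, ((B t).card : ℝ) * (4 * S / c)
      ≤ L * (δ * m / (1000 * L ^ 2)) * (4 * S / c) := by
    calc ∑ t ∈ T, ((B t).card : ℝ) * (4 * S / c)
        ≤ ∑ _t ∈ T, (δ * m / (1000 * L ^ 2)) * (4 * S / c) :=
          Finset.sum_le_sum fun t ht =>
            mul_le_mul_of_nonneg_right (hB t ht) hdivnn
      _ = (T.card : ℝ) * ((δ * m / (1000 * L ^ 2)) * (4 * S / c)) := by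
          rw [Finset.sum_const, nsmul_eq_mul]
      _ ≤ L * (δ * m / (1000 * L ^ 2)) * (4 * S / c) := by
          rw [mul_assoc]
          exact mul_le_mul_of_nonneg_right hT (by positivity)
  refine (hstep.trans hstep2).trans ?_
  -- L * (δm/(1000L²)) * (4S/c) ≤ δ S  given c ≥ m/(100L)
  have hc : m / (100 * L) ≤ c := hBstar
  have h1 : 4 * S / c ≤ 4 * S / (m / (100 * L)) := by
    apply div_le_div_of_nonneg_left (by positivity) (by positivity) hc
  have h2 : L * (δ * m / (1000 * L ^ 2)) * (4 * S / c)
      ≤ L * (δ * m / (1000 * L ^ 2)) * (4 * S / (m / (100 * L))) := by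
    exact mul_le_mul_of_nonneg_left h1 (by positivity)
  refine h2.trans ?_
  have : L * (δ * m / (1000 * L ^ 2)) * (4 * S / (m / (100 * L)))
      = (2/5) * (δ * S) := by
    field_simp
    ring
  rw [this]
  nlinarith [mul_nonneg hδ.le hSnn]
end

section
/- If the ordering π of X has maximum dislocation D, then for every subset Y ⊆ X the induced ordering of Y also has maximum dislocation at most D; that is, |π_Y(x) − rank_Y(x)| ≤ D for every x ∈ Y. -/
open Finset

private lemma aux_card_filter_le_equiv_fin {X : Type*} [Fintype X] [DecidableEq X]
    (π : X ≃ Fin (Fintype.card X)) (x : X) :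
    (univ.filter (fun y => π y ≤ π x)).card = (π x : ℕ) + 1 := by
  have h1 : (univ.filter (fun y => π y ≤ π x)).card
      = (univ.filter (fun j : Fin (Fintype.card X) => j ≤ π x)).card := by
    apply Finset.card_bij (fun y _ => π y)
    · intro a ha; simp only [mem_filter, mem_univ, true_and] at ha ⊢; exact ha
    · intro a _ b _ hab; exact π.injective hab
    · intro j hj; refine ⟨π.symm j, ?_, by simp⟩
      simp only [mem_filter, mem_univ, true_and] at hj ⊢
      simpa using hj
  have h2 : (univ.filter (fun j : Fin (Fintype.card X) => j ≤ π x)) = Finset.Iic (π x) := by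
    ext j; simp
  rw [h1, h2, Fin.card_Iic]

private lemma aux_rank_lt_rank {X : Type*} [Fintype X] [LinearOrder X] {z x : X} (h : z < x) :
    (univ.filter (fun y => y ≤ z)).card < (univ.filter (fun y => y ≤ x)).card := by
  apply Finset.card_lt_card
  constructor
  · intro y hy
    have hy' := Finset.mem_filter.mp hy
    exact Finset.mem_filter.mpr ⟨hy'.1, le_trans hy'.2 h.le⟩
  · intro hsub
    have hxmem : x ∈ univ.filter (fun y => y ≤ x) :=
      Finset.mem_filter.mpr ⟨Finset.mem_univ x, le_refl x⟩
    have := (Finset.mem_filter.mp (hsub hxmem)).2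
    exact absurd this (not_le.mpr h)

private lemma aux_exists_big (S : Finset ℕ) (m : ℕ) (hne : S.Nonempty) (h : ∀ s ∈ S, m < s) :
    ∃ s ∈ S, m + S.card ≤ s := by
  refine ⟨S.max' hne, S.max'_mem hne, ?_⟩
  have hsub : S ⊆ Finset.Icc (m + 1) (S.max' hne) := fun s hs =>
    Finset.mem_Icc.mpr ⟨h s hs, S.le_max' s hs⟩
  have := Finset.card_le_card hsub
  rw [Nat.card_Icc] at this
  have hm : m < S.max' hne := h _ (S.max'_mem hne)
  omega

private lemma aux_exists_small (S : Finset ℕ) (m : ℕ) (hne : S.Nonempty) (h : ∀ s ∈ S, s < m) :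
    ∃ s ∈ S, s + S.card ≤ m := by
  refine ⟨S.min' hne, S.min'_mem hne, ?_⟩
  have hsub : S ⊆ Finset.Icc (S.min' hne) (m - 1) := fun s hs =>
    Finset.mem_Icc.mpr ⟨S.min'_le s hs, by have := h s hs; omega⟩
  have := Finset.card_le_card hsub
  rw [Nat.card_Icc] at this
  have hm : S.min' hne < m := h _ (S.min'_mem hne)
  omega

/-- If an ordering `π` of a finite linearly ordered set `X` (a bijection onto
`{1, …, N}`, encoded as `X ≃ Fin N` with positions `π(x) + 1`) has maximum
dislocation `D`, i.e. `|π(x) − rank(x)| ≤ D` where `rank(x) = |{y : y ≤ x}|`,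
then for every subset `Y ⊆ X` the induced ordering of `Y` also has maximum
dislocation at most `D`: `|π_Y(x) − rank_Y(x)| ≤ D` for every `x ∈ Y`, where
`π_Y(x) = |{y ∈ Y : π(y) ≤ π(x)}|` and `rank_Y(x) = |{y ∈ Y : y ≤ x}|`. -/
theorem stmt9 {X : Type*} [Fintype X] [LinearOrder X]
    (π : X ≃ Fin (Fintype.card X)) (D : ℕ)
    (hdis : ∀ x : X,
      |(((π x : ℕ) : ℤ) + 1) -
        ((Finset.univ.filter (fun y => y ≤ x)).card : ℤ)| ≤ (D : ℤ))
    (Y : Finset X) (x : X) (hx : x ∈ Y) :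
    |((Y.filter (fun y => π y ≤ π x)).card : ℤ) -
      ((Y.filter (fun y => y ≤ x)).card : ℤ)| ≤ (D : ℤ) := by
  classical
  set A : Finset X := univ.filter (fun y => π y ≤ π x) with hA
  set B : Finset X := univ.filter (fun y => y ≤ x) with hB
  set C : Finset X := univ.filter (fun y => π y ≤ π x ∧ y ≤ x) with hC
  set Sa : Finset X := univ.filter (fun y => π y ≤ π x ∧ ¬ y ≤ x) with hSa
  set Sb : Finset X := univ.filter (fun y => y ≤ x ∧ ¬ π y ≤ π x) with hSb
  have hACard : A.card = (π x : ℕ) + 1 := aux_card_filter_le_equiv_fin π x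
  have hAsplit : C.card + Sa.card = A.card := by
    rw [hA, hC, hSa, ← Finset.filter_filter, ← Finset.filter_filter]
    exact Finset.card_filter_add_card_filter_not _
  have hBsplit : C.card + Sb.card = B.card := by
    have hC' : (univ.filter (fun y => y ≤ x ∧ π y ≤ π x)) = C := by
      rw [hC]; ext y; simp [and_comm]
    rw [hB, ← hC', hSb, ← Finset.filter_filter, ← Finset.filter_filter]
    exact Finset.card_filter_add_card_filter_not _
  have hdx := hdis x
  rw [abs_le] at hdx
  rw [← hB] at hdx
  have hAB : (A.card : ℤ) - B.card = (Sa.card : ℤ) - Sb.card := by omega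
  -- injective value map
  have hinj : Function.Injective (fun y : X => (π y : ℕ)) :=
    Fin.val_injective.comp π.injective
  -- Sa.card ≤ D
  have hαD : (Sa.card : ℤ) ≤ D := by
    rcases Finset.eq_empty_or_nonempty Sb with hSbE | hSbNe
    · have : Sb.card = 0 := by rw [hSbE]; rfl
      omega
    · obtain ⟨v, hv, hvge⟩ := aux_exists_big (Sb.image (fun y => (π y : ℕ))) (π x : ℕ)
        (hSbNe.image _) (by
          intro s hs
          obtain ⟨z, hz, rfl⟩ := Finset.mem_image.mp hs
          have hz' := Finset.mem_filter.mp hz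
          have : π x < π z := lt_of_not_ge hz'.2.2
          exact this)
      obtain ⟨z, hz, rfl⟩ := Finset.mem_image.mp hv
      rw [Finset.card_image_of_injective _ hinj] at hvge
      have hz' := Finset.mem_filter.mp hz
      have hzx : z < x := lt_of_le_of_ne hz'.2.1 (by
        rintro rfl; exact hz'.2.2 le_rfl)
      have hrk : (univ.filter (fun y => y ≤ z)).card < B.card := aux_rank_lt_rank hzx
      have hdz := hdis z
      rw [abs_le] at hdz
      omega
  -- Sb.card ≤ D
  have hβD : (Sb.card : ℤ) ≤ D := by
    rcases Finset.eq_empty_or_nonempty Sa with hSaE | hSaNe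
    · have : Sa.card = 0 := by rw [hSaE]; rfl
      omega
    · obtain ⟨v, hv, hvle⟩ := aux_exists_small (Sa.image (fun y => (π y : ℕ))) (π x : ℕ)
        (hSaNe.image _) (by
          intro s hs
          obtain ⟨z, hz, rfl⟩ := Finset.mem_image.mp hs
          have hz' := Finset.mem_filter.mp hz
          have hne : z ≠ x := by rintro rfl; exact hz'.2.2 le_rfl
          have : π z < π x := lt_of_le_of_ne hz'.2.1 (fun h => hne (π.injective h))
          exact this)
      obtain ⟨z, hz, rfl⟩ := Finset.mem_image.mp hv
      rw [Finset.card_image_of_injective _ hinj] at hvle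
      have hz' := Finset.mem_filter.mp hz
      have hzx : x < z := lt_of_not_ge hz'.2.2
      have hrk : B.card < (univ.filter (fun y => y ≤ z)).card := aux_rank_lt_rank hzx
      have hdz := hdis z
      rw [abs_le] at hdz
      omega
  -- split the Y-filters
  have hYsplit1 : (Y.filter (fun y => π y ≤ π x)).card
      = (Y.filter (fun y => π y ≤ π x ∧ y ≤ x)).card
        + (Y.filter (fun y => π y ≤ π x ∧ ¬ y ≤ x)).card := by
    rw [← Finset.filter_filter, ← Finset.filter_filter,
      Finset.card_filter_add_card_filter_not]
  have hYsplit2 : (Y.filter (fun y => y ≤ x)).card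
      = (Y.filter (fun y => π y ≤ π x ∧ y ≤ x)).card
        + (Y.filter (fun y => y ≤ x ∧ ¬ π y ≤ π x)).card := by
    have hcomm : (Y.filter (fun y => π y ≤ π x ∧ y ≤ x))
        = (Y.filter (fun y => y ≤ x ∧ π y ≤ π x)) := by
      ext y; simp [and_comm]
    rw [hcomm, ← Finset.filter_filter, ← Finset.filter_filter,
      Finset.card_filter_add_card_filter_not]
  have hsub1 : (Y.filter (fun y => π y ≤ π x ∧ ¬ y ≤ x)).card ≤ Sa.card := by
    apply Finset.card_le_card
    rw [hSa]
    exact Finset.filter_subset_filter _ (fun y _ => Finset.mem_univ y) |>.trans (le_refl _) |>.trans (le_refl _)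
  have hsub2 : (Y.filter (fun y => y ≤ x ∧ ¬ π y ≤ π x)).card ≤ Sb.card := by
    apply Finset.card_le_card
    rw [hSb]
    intro y hy
    have := Finset.mem_filter.mp hy
    exact Finset.mem_filter.mpr ⟨Finset.mem_univ y, this.2⟩
  rw [hYsplit1, hYsplit2, abs_le]
  omega
end

section
/- Let (V,d) be a finite metric space, S ⊆ V a nonempty subset, C* ⊆ V a nonempty set of centers, and c ∈ C*. Then every v ∈ V whose nearest center is c (i.e., d(v,c) = d(v,C*)) and which satisfies d(v,S) > 2·d(v,C*) must satisfy d(v,c) < d(c,S). Consequently, |{v ∈ V : d(v,c) = d(v,C*) and d(v,S) > 2·d(v,C*)}| ≤ |{x ∈ V : d(x,c) < d(c,S)}|. -/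
open Finset

/-- Deterministic core of the bad-vertex bound: let `(V,d)` be a finite metric
space, `S ⊆ V` nonempty, `C* ⊆ V` a nonempty set of centers and `c ∈ C*`.
Every `v ∈ V` whose nearest center is `c` (i.e. `d(v,c) = d(v,C*)`) and which
satisfies `d(v,S) > 2·d(v,C*)` must satisfy `d(v,c) < d(c,S)`. Consequently,
`|{v : d(v,c) = d(v,C*) ∧ d(v,S) > 2·d(v,C*)}| ≤ |{x : d(x,c) < d(c,S)}|`. -/
theorem stmt12 {V : Type*} [MetricSpace V] [Fintype V]
    (S : Finset V) (hS : S.Nonempty)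
    (Cstar : Finset V) (hC : Cstar.Nonempty) (c : V) (hc : c ∈ Cstar) :
    (∀ v : V, dist v c = Cstar.inf' hC (dist v) →
      2 * Cstar.inf' hC (dist v) < S.inf' hS (dist v) →
      dist v c < S.inf' hS (dist c)) ∧
    (Finset.univ.filter (fun v : V =>
        dist v c = Cstar.inf' hC (dist v) ∧
        2 * Cstar.inf' hC (dist v) < S.inf' hS (dist v))).card ≤
      (Finset.univ.filter (fun x : V => dist x c < S.inf' hS (dist c))).card := by
  have key : ∀ v : V, dist v c = Cstar.inf' hC (dist v) →
      2 * Cstar.inf' hC (dist v) < S.inf' hS (dist v) →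
      dist v c < S.inf' hS (dist c) := by
    intro v hv h2
    rw [← hv] at h2
    rw [Finset.lt_inf'_iff]
    intro s hs
    have h1 : S.inf' hS (dist v) ≤ dist v s := Finset.inf'_le _ hs
    have h3 : dist v s ≤ dist v c + dist c s := dist_triangle v c s
    linarith
  refine ⟨key, Finset.card_le_card ?_⟩
  intro v hv
  simp only [Finset.mem_filter, Finset.mem_univ, true_and] at *
  exact key v hv.1 hv.2
end

section
/- Let (V,d) be a finite metric space with |V| = N in which all distances between distinct pairs of points are distinct, let C* ⊆ V with |C*| = k, and fix an assignment of each v ∈ V to a nearest center c(v) ∈ C* (so d(v,c(v)) = d(v,C*)). Let m, t be positive integers with t ≤ N, let L ≥ 0 be a real, and let s_1, …, s_m be drawn independently and uniformly at random from V. Call v ∈ V bad if d(v, {s_1,…,s_m}) > max(L, 2·d(v,C*)). Then for each c ∈ C*, Pr[ |{v ∈ V : c(v) = c and v is bad}| ≥ t ] ≤ (1 − t/N)^m, and consequently Pr[ |{v ∈ V : v is bad}| ≥ k·t ] ≤ k·(1 − t/N)^m. -/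
open Finset


/-- Bad-vertex sampling lemma: let `(V,d)` be a finite metric space with
`|V| = N` in which all distances between distinct pairs are distinct, let
`C* ⊆ V` with `|C*| = k` and fix an assignment `cmap` of each `v` to a nearest
center in `C*`. Let `m, t` be positive integers with `t ≤ N`, `L ≥ 0` a real,
and draw `s_1, …, s_m` independently and uniformly at random from `V` (so the
probability of an event is the number of tuples `s : Fin m → V` realizing it,
divided by `N^m`). Call `v` bad if `d(v, {s_1,…,s_m}) > max(L, 2·d(v,C*))`.
Then for each `c ∈ C*`,
`Pr[ |{v : cmap v = c ∧ v bad}| ≥ t ] ≤ (1 − t/N)^m`, and consequently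
`Pr[ |{v : v bad}| ≥ k·t ] ≤ k·(1 − t/N)^m`. -/
theorem stmt13 {V : Type*} [MetricSpace V] [Fintype V]
    (hdistinct : ∀ a b c e : V, a ≠ b → c ≠ e → dist a b = dist c e →
      (a = c ∧ b = e) ∨ (a = e ∧ b = c))
    (Cstar : Finset V) (hC : Cstar.Nonempty) (k : ℕ) (hk : Cstar.card = k)
    (cmap : V → V) (hcin : ∀ v, cmap v ∈ Cstar)
    (hcnear : ∀ v, dist v (cmap v) = Cstar.inf' hC (dist v))
    (m t : ℕ) (hm : 0 < m) (ht : 0 < t) (htN : t ≤ Fintype.card V)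
    (L : ℝ) (hL : 0 ≤ L) :
    (∀ c ∈ Cstar,
      ((Nat.card {s : Fin m → V //
          t ≤ Nat.card {v : V // cmap v = c ∧
            max L (2 * Cstar.inf' hC (dist v)) < sInf (dist v '' Set.range s)}} : ℝ)
        / (Fintype.card V : ℝ) ^ m)
        ≤ (1 - (t : ℝ) / (Fintype.card V : ℝ)) ^ m) ∧
    (((Nat.card {s : Fin m → V //
          k * t ≤ Nat.card {v : V //
            max L (2 * Cstar.inf' hC (dist v)) < sInf (dist v '' Set.range s)}} : ℝ)
        / (Fintype.card V : ℝ) ^ m)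
        ≤ (k : ℝ) * (1 - (t : ℝ) / (Fintype.card V : ℝ)) ^ m) := by
  classical
  set N := Fintype.card V with hNdef
  have hNpos : 0 < N := lt_of_lt_of_le ht htN
  have hN0 : ((N : ℝ)) ≠ 0 := by positivity
  -- injectivity of distances to a fixed point
  have finj : ∀ c u u' : V, dist u c = dist u' c → u = u' := by
    intro c u u' hd
    by_cases hu : u = c
    · subst hu
      have h0 : dist u' u = 0 := by simpa using hd.symm
      exact (dist_eq_zero.mp h0).symm
    · by_cases hu' : u' = c
      · subst hu'
        have h0 : dist u u' = 0 := by simpa using hd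
        exact dist_eq_zero.mp h0
      · rcases hdistinct u c u' c hu hu' hd with ⟨h1, _⟩ | ⟨h1, _⟩
        · exact h1
        · exact absurd h1 hu
  -- sInf over samples is at most any individual distance
  have hsInf_le : ∀ (s : Fin m → V) (v : V) (i : Fin m),
      sInf (dist v '' Set.range s) ≤ dist v (s i) := by
    intro s v i
    apply csInf_le
    · refine ⟨0, fun x hx => ?_⟩
      obtain ⟨u, -, rfl⟩ := hx
      exact dist_nonneg
    · exact ⟨s i, ⟨i, rfl⟩, rfl⟩
  -- Nat.card of subtypes as filter cards
  have hinner : ∀ (q : V → Prop) [DecidablePred q],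
      Nat.card {v : V // q v} = (univ.filter q).card := by
    intro q _
    simp [Nat.card_eq_fintype_card, Fintype.card_subtype]
  have houter : ∀ (P : (Fin m → V) → Prop) [DecidablePred P],
      Nat.card {s : Fin m → V // P s} = (univ.filter P).card := by
    intro P _
    simp [Nat.card_eq_fintype_card, Fintype.card_subtype]
  -- key per-center bound, filter form
  have keyF : ∀ c ∈ Cstar,
      (univ.filter (fun s : Fin m → V =>
        t ≤ Nat.card {v : V // cmap v = c ∧
          max L (2 * Cstar.inf' hC (dist v)) < sInf (dist v '' Set.range s)})).card
      ≤ (N - t) ^ m := by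
    intro c hc
    set clu : Finset V := univ.filter (fun v => cmap v = c) with hclu
    have hbad_sub : ∀ s : Fin m → V,
        univ.filter (fun v : V => cmap v = c ∧
          max L (2 * Cstar.inf' hC (dist v)) < sInf (dist v '' Set.range s)) ⊆ clu := by
      intro s v hv
      rw [hclu]
      simp only [mem_filter, mem_univ, true_and] at hv ⊢
      exact hv.1
    by_cases hn : t ≤ clu.card
    · -- main case
      set hcnt : V → ℕ := fun a => (clu.filter (fun u => dist u c < dist a c)).card
        with hcntdef
      have hmono : ∀ a ∈ clu, ∀ b : V, dist a c < dist b c → hcnt a < hcnt b := by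
        intro a ha b hab
        have hsub : clu.filter (fun u => dist u c < dist a c)
            ⊆ clu.filter (fun u => dist u c < dist b c) := by
          intro u hu
          simp only [mem_filter] at hu ⊢
          exact ⟨hu.1, lt_trans hu.2 hab⟩
        have hmem : a ∈ clu.filter (fun u => dist u c < dist b c) :=
          Finset.mem_filter.mpr ⟨ha, hab⟩
        have hnmem : a ∉ clu.filter (fun u => dist u c < dist a c) := by simp
        exact Finset.card_lt_card ((Finset.ssubset_iff_of_subset hsub).mpr ⟨a, hmem, hnmem⟩)
      have hinj : ∀ a ∈ clu, ∀ b ∈ clu, hcnt a = hcnt b → a = b := by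
        intro a ha b hb hab
        by_contra hne
        have hfne : dist a c ≠ dist b c := fun e => hne (finj c a b e)
        rcases hfne.lt_or_gt with hlt | hlt
        · exact absurd hab (Nat.ne_of_lt (hmono a ha b hlt))
        · exact absurd hab.symm (Nat.ne_of_lt (hmono b hb a hlt))
      have hlt_card : ∀ a ∈ clu, hcnt a < clu.card := by
        intro a ha
        have hsub : clu.filter (fun u => dist u c < dist a c) ⊆ clu.erase a := by
          intro u hu
          simp only [mem_filter] at hu
          refine Finset.mem_erase.mpr ⟨fun e => ?_, hu.1⟩
          rw [e] at hu
          exact lt_irrefl _ hu.2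
        calc hcnt a ≤ (clu.erase a).card := Finset.card_le_card hsub
          _ < clu.card := Finset.card_erase_lt_of_mem ha
      have himg : clu.image hcnt = Finset.range clu.card := by
        apply Finset.eq_of_subset_of_card_le
        · intro x hx
          obtain ⟨a, ha, rfl⟩ := Finset.mem_image.mp hx
          exact Finset.mem_range.mpr (hlt_card a ha)
        · rw [Finset.card_range,
            Finset.card_image_of_injOn
              (fun a ha b hb hab => hinj a (Finset.mem_coe.mp ha) b (Finset.mem_coe.mp hb) hab)]
      set A : Finset V := clu.filter (fun a => hcnt a < t) with hAdef
      have hAsub : A ⊆ clu := Finset.filter_subset _ _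
      have hAcard : A.card = t := by
        have h3 : A.card = (A.image hcnt).card :=
          (Finset.card_image_of_injOn
            (fun a ha b hb hab => hinj a (hAsub (Finset.mem_coe.mp ha))
              b (hAsub (Finset.mem_coe.mp hb)) hab)).symm
        have h1 : A.image hcnt = (Finset.range clu.card).filter (fun x => x < t) := by
          rw [← himg]
          ext x
          simp only [Finset.mem_image, Finset.mem_filter, hAdef]
          constructor
          · rintro ⟨a, ha, rfl⟩
            exact ⟨⟨a, ha.1, rfl⟩, ha.2⟩
          · rintro ⟨⟨a, ha, rfl⟩, hx⟩
            exact ⟨a, ⟨ha, hx⟩, rfl⟩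
        have h2 : (Finset.range clu.card).filter (fun x => x < t) = Finset.range t := by
          ext x
          simp only [Finset.mem_filter, Finset.mem_range]
          omega
        rw [h3, h1, h2, Finset.card_range]
      -- avoidance
      have havoid : ∀ s : Fin m → V,
          t ≤ Nat.card {v : V // cmap v = c ∧
            max L (2 * Cstar.inf' hC (dist v)) < sInf (dist v '' Set.range s)} →
          ∀ i, s i ∉ A := by
        intro s hts i hmem
        rw [hinner] at hts
        set B := univ.filter (fun v : V => cmap v = c ∧
          max L (2 * Cstar.inf' hC (dist v)) < sInf (dist v '' Set.range s)) with hBdef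
        obtain ⟨ha1, ha2⟩ := Finset.mem_filter.mp hmem
        have hnot : ¬ B ⊆ clu.filter (fun u => dist u c < dist (s i) c) := by
          intro hsub
          have hcard2 : B.card ≤ hcnt (s i) := Finset.card_le_card hsub
          have hts2 : t ≤ hcnt (s i) := le_trans hts hcard2
          omega
        obtain ⟨v, hvB, hvnot⟩ := Finset.not_subset.mp hnot
        obtain ⟨-, hvc, hvbad⟩ := Finset.mem_filter.mp hvB
        have hvclu : v ∈ clu := hbad_sub s hvB
        have hfle : dist (s i) c ≤ dist v c :=
          le_of_not_gt (fun hlt => hvnot (Finset.mem_filter.mpr ⟨hvclu, hlt⟩))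
        have hdv : Cstar.inf' hC (dist v) = dist v c := by rw [← hcnear v, hvc]
        have hchain : dist v (s i) ≤ 2 * Cstar.inf' hC (dist v) := by
          rw [hdv]
          calc dist v (s i) ≤ dist v c + dist c (s i) := dist_triangle v c (s i)
            _ = dist v c + dist (s i) c := by rw [dist_comm c (s i)]
            _ ≤ dist v c + dist v c := by linarith
            _ = 2 * dist v c := by ring
        have hle : sInf (dist v '' Set.range s) ≤ max L (2 * Cstar.inf' hC (dist v)) :=
          le_trans (hsInf_le s v i) (le_max_of_le_right hchain)
        exact absurd hvbad (not_lt.mpr hle)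
      have hsubset : univ.filter (fun s : Fin m → V =>
            t ≤ Nat.card {v : V // cmap v = c ∧
              max L (2 * Cstar.inf' hC (dist v)) < sInf (dist v '' Set.range s)})
          ⊆ univ.filter (fun s : Fin m → V => ∀ i, s i ∉ A) := by
        intro s hs
        simp only [mem_filter, mem_univ, true_and] at hs ⊢
        exact havoid s hs
      have e : {s : Fin m → V // ∀ i, s i ∉ A} ≃ (Fin m → {v : V // v ∉ A}) :=
        Equiv.subtypePiEquivPi (p := fun (_ : Fin m) (b : V) => b ∉ A)
      have h1 : Fintype.card {v : V // v ∉ A} = N - A.card := by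
        simp [Fintype.card_subtype_compl, hNdef]
      have hcount : (univ.filter (fun s : Fin m → V => ∀ i, s i ∉ A)).card
          = (N - A.card) ^ m := by
        rw [← Fintype.card_subtype, Fintype.card_congr e]
        simp [h1]
      calc (univ.filter (fun s : Fin m → V =>
            t ≤ Nat.card {v : V // cmap v = c ∧
              max L (2 * Cstar.inf' hC (dist v)) < sInf (dist v '' Set.range s)})).card
          ≤ (univ.filter (fun s : Fin m → V => ∀ i, s i ∉ A)).card :=
            Finset.card_le_card hsubset
        _ = (N - A.card) ^ m := hcount
        _ ≤ (N - t) ^ m := by rw [hAcard]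
    · -- degenerate case: cluster smaller than t, event empty
      have hempty : (univ.filter (fun s : Fin m → V =>
          t ≤ Nat.card {v : V // cmap v = c ∧
            max L (2 * Cstar.inf' hC (dist v)) < sInf (dist v '' Set.range s)})) = ∅ := by
        apply Finset.filter_eq_empty_iff.mpr
        intro s _
        rw [hinner]
        intro hts
        exact hn (le_trans hts (Finset.card_le_card (hbad_sub s)))
      rw [hempty]
      simp
  -- pigeonhole
  have pigeon : ∀ s : Fin m → V,
      k * t ≤ Nat.card {v : V //
        max L (2 * Cstar.inf' hC (dist v)) < sInf (dist v '' Set.range s)} →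
      ∃ c ∈ Cstar, t ≤ Nat.card {v : V // cmap v = c ∧
        max L (2 * Cstar.inf' hC (dist v)) < sInf (dist v '' Set.range s)} := by
    intro s hs
    by_contra hcon
    push_neg at hcon
    rw [hinner] at hs
    have hkpos : 0 < k := hk ▸ Finset.card_pos.mpr hC
    have hsub : univ.filter (fun v : V =>
          max L (2 * Cstar.inf' hC (dist v)) < sInf (dist v '' Set.range s))
        ⊆ Cstar.biUnion (fun c => univ.filter (fun v : V => cmap v = c ∧
          max L (2 * Cstar.inf' hC (dist v)) < sInf (dist v '' Set.range s))) := by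
      intro v hv
      simp only [mem_filter, mem_univ, true_and] at hv
      exact Finset.mem_biUnion.mpr ⟨cmap v, hcin v,
        Finset.mem_filter.mpr ⟨Finset.mem_univ _, rfl, hv⟩⟩
    have hle1 : k * t ≤ ∑ c ∈ Cstar, (univ.filter (fun v : V => cmap v = c ∧
        max L (2 * Cstar.inf' hC (dist v)) < sInf (dist v '' Set.range s))).card :=
      le_trans hs (le_trans (Finset.card_le_card hsub) Finset.card_biUnion_le)
    have hle2 : ∑ c ∈ Cstar, (univ.filter (fun v : V => cmap v = c ∧
        max L (2 * Cstar.inf' hC (dist v)) < sInf (dist v '' Set.range s))).card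
        ≤ ∑ _c ∈ Cstar, (t - 1) := by
      apply Finset.sum_le_sum
      intro c hc
      have hcc := hcon c hc
      rw [hinner] at hcc
      omega
    rw [Finset.sum_const, hk, smul_eq_mul] at hle2
    have hlt : k * (t - 1) < k * t :=
      mul_lt_mul_of_pos_left (by omega) hkpos
    exact absurd (le_trans hle1 hle2) (not_le.mpr hlt)
  -- numeric conversion
  have h1 : ((N - t : ℕ) : ℝ) / (N : ℝ) = 1 - (t : ℝ) / (N : ℝ) := by
    rw [Nat.cast_sub htN, sub_div, div_self hN0]
  constructor
  · intro c hc
    have hkey := keyF c hc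
    rw [← houter] at hkey
    calc (Nat.card {s : Fin m → V //
          t ≤ Nat.card {v : V // cmap v = c ∧
            max L (2 * Cstar.inf' hC (dist v)) < sInf (dist v '' Set.range s)}} : ℝ)
          / (N : ℝ) ^ m
        ≤ ((N - t : ℕ) : ℝ) ^ m / (N : ℝ) ^ m := by
          gcongr
          exact_mod_cast hkey
      _ = (1 - (t : ℝ) / (N : ℝ)) ^ m := by rw [← div_pow, h1]
  · have hkeyAll : (univ.filter (fun s : Fin m → V =>
        k * t ≤ Nat.card {v : V //
          max L (2 * Cstar.inf' hC (dist v)) < sInf (dist v '' Set.range s)})).card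
        ≤ k * (N - t) ^ m := by
      have hsub : univ.filter (fun s : Fin m → V =>
            k * t ≤ Nat.card {v : V //
              max L (2 * Cstar.inf' hC (dist v)) < sInf (dist v '' Set.range s)})
          ⊆ Cstar.biUnion (fun c => univ.filter (fun s : Fin m → V =>
            t ≤ Nat.card {v : V // cmap v = c ∧
              max L (2 * Cstar.inf' hC (dist v)) < sInf (dist v '' Set.range s)})) := by
        intro s hs
        simp only [mem_filter, mem_univ, true_and] at hs
        obtain ⟨c, hc, hct⟩ := pigeon s hs
        exact Finset.mem_biUnion.mpr ⟨c, hc, Finset.mem_filter.mpr ⟨Finset.mem_univ _, hct⟩⟩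
      calc (univ.filter (fun s : Fin m → V =>
            k * t ≤ Nat.card {v : V //
              max L (2 * Cstar.inf' hC (dist v)) < sInf (dist v '' Set.range s)})).card
          ≤ (Cstar.biUnion (fun c => univ.filter (fun s : Fin m → V =>
            t ≤ Nat.card {v : V // cmap v = c ∧
              max L (2 * Cstar.inf' hC (dist v)) < sInf (dist v '' Set.range s)}))).card :=
            Finset.card_le_card hsub
        _ ≤ ∑ c ∈ Cstar, (univ.filter (fun s : Fin m → V =>
            t ≤ Nat.card {v : V // cmap v = c ∧
              max L (2 * Cstar.inf' hC (dist v)) < sInf (dist v '' Set.range s)})).card :=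
            Finset.card_biUnion_le
        _ ≤ ∑ _c ∈ Cstar, (N - t) ^ m := Finset.sum_le_sum (fun c hc => keyF c hc)
        _ = k * (N - t) ^ m := by rw [Finset.sum_const, hk, smul_eq_mul]
    rw [← houter] at hkeyAll
    calc (Nat.card {s : Fin m → V //
          k * t ≤ Nat.card {v : V //
            max L (2 * Cstar.inf' hC (dist v)) < sInf (dist v '' Set.range s)}} : ℝ)
          / (N : ℝ) ^ m
        ≤ ((k * (N - t) ^ m : ℕ) : ℝ) / (N : ℝ) ^ m := by
          have : ((Nat.card {s : Fin m → V //
              k * t ≤ Nat.card {v : V //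
                max L (2 * Cstar.inf' hC (dist v)) < sInf (dist v '' Set.range s)}} : ℕ) : ℝ)
              ≤ ((k * (N - t) ^ m : ℕ) : ℝ) := by exact_mod_cast hkeyAll
          exact div_le_div_of_nonneg_right this (by positivity) |>.trans_eq rfl
      _ = (k : ℝ) * (1 - (t : ℝ) / (N : ℝ)) ^ m := by
          rw [Nat.cast_mul, Nat.cast_pow, mul_div_assoc, ← div_pow, h1]
end

section
/- Let (V,d) be a finite metric space, k a positive integer, and opt_k = min{ Σ_{v∈V} d(v,U) : U ⊆ V, |U| = k }, where d(v,U) = min_{u∈U} d(v,u). Let C ⊆ V with |C| ≥ k and let M : V → C satisfy Σ_{v∈V} d(v, M(v)) ≤ α·opt_k for some real α ≥ 0. Define weights w(c) = |{v ∈ V : M(v) = c}| for c ∈ C. Then for every real β ≥ 1 and every A ⊆ C with |A| = k satisfying Σ_{c∈C} w(c)·d(c,A) ≤ β · min{ Σ_{c∈C} w(c)·d(c,U) : U ⊆ C, |U| = k }, it holds that Σ_{v∈V} d(v,A) ≤ (α + 2β(α+1)) · opt_k. -/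
/-!
Let `U₀` be an optimal `k`-median solution on `V`. Moving each centre `u ∈ U₀` to a nearest
point `p u` of `C` loses at most a factor `2` for points `c ∈ C`, since
`d(c, p u) ≤ d(c, u) + d(u, p u) ≤ 2 d(c, u)`. The weighted cost of a set `U` is
`Σ_v d(M v, U)`, so padding `p(U₀)` to `k` points of `C` gives a weighted competitor of cost
at most `2 Σ_v d(M v, U₀) ≤ 2 (α + 1) opt_k`. The triangle inequality
`d(v, A) ≤ d(v, M v) + d(M v, A)` and the `β`-approximation property of `A` finish the proof.
-/

open Finset Metric

section Metric

variable {V : Type*} [PseudoMetricSpace V]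

lemma sInf_image_dist_eq_infDist (x : V) (s : Set V) :
    sInf (dist x '' s) = infDist x s := by
  rw [sInf_image', infDist_eq_iInf]

lemma infDist_le_two_mul_infDist {c : V} {s t : Set V}
    (hs : s.Nonempty) (h : ∀ u ∈ s, ∃ w ∈ t, dist u w ≤ dist u c) :
    infDist c t ≤ 2 * infDist c s := by
  suffices infDist c t / 2 ≤ infDist c s by linarith
  refine (le_infDist hs).2 fun u hu => ?_
  obtain ⟨w, hwt, hw⟩ := h u hu
  have : infDist c t ≤ dist c u + dist u w :=
    (infDist_le_dist_of_mem hwt).trans (dist_triangle c u w)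
  linarith [dist_comm c u]

lemma sum_infDist_le_sum_infDist_add_sum_dist {ι : Type*} (I : Finset ι)
    (x y : ι → V) (s : Set V) :
    ∑ i ∈ I, infDist (x i) s ≤ ∑ i ∈ I, infDist (y i) s + ∑ i ∈ I, dist (x i) (y i) := by
  rw [← sum_add_distrib]
  exact sum_le_sum fun i _ => infDist_le_infDist_add_dist

lemma exists_subset_card_eq_nearest [DecidableEq V] {C U₀ : Finset V}
    {k : ℕ} (hC : C.Nonempty) (hU₀ : U₀.card ≤ k) (hCk : k ≤ C.card) :
    ∃ U ⊆ C, U.card = k ∧ ∀ u ∈ U₀, ∃ w ∈ U, ∀ c ∈ C, dist u w ≤ dist u c := by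
  choose p hpC hp using fun u : V => C.exists_min_image (dist u) hC
  obtain ⟨U, hpU, hUC, hUk⟩ := exists_subsuperset_card_eq
    (s := U₀.image p) (image_subset_iff.2 fun u _ => hpC u) (card_image_le.trans hU₀) hCk
  exact ⟨U, hUC, hUk, fun u hu => ⟨p u, hpU (mem_image_of_mem p hu), hp u⟩⟩

lemma exists_subset_card_eq_infDist_le_two_mul [DecidableEq V]
    {C U₀ : Finset V} {k : ℕ} (hU₀ : U₀.Nonempty) (hU₀k : U₀.card ≤ k) (hCk : k ≤ C.card) :
    ∃ U ⊆ C, U.card = k ∧ ∀ c ∈ C, infDist c U ≤ 2 * infDist c U₀ := by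
  have hC : C.Nonempty := card_pos.1 ((card_pos.2 hU₀).trans_le (hU₀k.trans hCk))
  obtain ⟨U, hUC, hUk, hU⟩ := exists_subset_card_eq_nearest hC hU₀k hCk
  exact ⟨U, hUC, hUk, fun c hc => infDist_le_two_mul_infDist (by exact_mod_cast hU₀)
    fun u hu => (hU u hu).imp fun w ⟨hw, hwc⟩ => ⟨hw, hwc c hc⟩⟩

end Metric

lemma sum_card_fiber_mul {V : Type*} [Fintype V] [DecidableEq V] {C : Finset V} {M : V → V}
    (hM : ∀ v, M v ∈ C) (f : V → ℝ) :
    ∑ c ∈ C, ((univ.filter fun v => M v = c).card : ℝ) * f c = ∑ v, f (M v) := by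
  rw [← sum_fiberwise_of_maps_to' (t := C) (fun v _ => hM v) f]
  exact sum_congr rfl fun c _ => by rw [sum_const, nsmul_eq_mul]

lemma exists_card_eq_sInf_eq {V : Type*} [Fintype V] {k : ℕ} (hk : k ≤ Fintype.card V)
    (f : Finset V → ℝ) :
    ∃ U : Finset V, U.card = k ∧ sInf {x | ∃ U : Finset V, U.card = k ∧ x = f U} = f U := by
  have hfin : {x | ∃ U : Finset V, U.card = k ∧ x = f U}.Finite :=
    (Set.finite_range f).subset fun x ⟨U, _, hx⟩ => ⟨U, hx.symm⟩
  obtain ⟨U, -, hU⟩ := exists_subset_card_eq (s := (univ : Finset V)) (by simpa using hk)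
  have hne : {x | ∃ U : Finset V, U.card = k ∧ x = f U}.Nonempty := ⟨f U, U, hU, rfl⟩
  obtain ⟨U', hU', h⟩ := hne.csInf_mem hfin
  exact ⟨U', hU', h⟩

theorem stmt14_general {V : Type*} [MetricSpace V] [Fintype V] [DecidableEq V]
    (k : ℕ) (hk : 0 < k) (hkcard : k ≤ Fintype.card V)
    (C : Finset V) (hCk : k ≤ C.card)
    (Mmap : V → V) (hM : ∀ v, Mmap v ∈ C)
    (α : ℝ)
    (hcost : ∑ v : V, dist v (Mmap v) ≤
      α * sInf {x : ℝ | ∃ U : Finset V, U.card = k ∧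
                  x = ∑ v : V, sInf (dist v '' ↑U)})
    (β : ℝ) (hβ : 1 ≤ β)
    (A : Finset V)
    (hAapprox : ∀ U : Finset V, U ⊆ C → U.card = k →
      ∑ c ∈ C, ((Finset.univ.filter (fun v => Mmap v = c)).card : ℝ) *
          sInf (dist c '' ↑A) ≤
        β * ∑ c ∈ C, ((Finset.univ.filter (fun v => Mmap v = c)).card : ℝ) *
          sInf (dist c '' ↑U)) :
    ∑ v : V, sInf (dist v '' ↑A) ≤
      (α + 2 * β * (α + 1)) *
        sInf {x : ℝ | ∃ U : Finset V, U.card = k ∧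
              x = ∑ v : V, sInf (dist v '' ↑U)} := by
  simp only [sInf_image_dist_eq_infDist, sum_card_fiber_mul hM] at hcost hAapprox ⊢
  obtain ⟨U₀, hU₀k, hopt⟩ := exists_card_eq_sInf_eq hkcard fun U => ∑ v, infDist v (U : Set V)
  rw [hopt] at hcost ⊢
  obtain ⟨U, hUC, hUk, hU⟩ :=
    exists_subset_card_eq_infDist_le_two_mul (card_pos.1 (hU₀k ▸ hk)) hU₀k.le hCk
  have hUcost : ∑ v, infDist (Mmap v) U ≤ 2 * (α + 1) * ∑ v, infDist v (U₀ : Set V) := calc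
    ∑ v, infDist (Mmap v) U ≤ 2 * ∑ v, infDist (Mmap v) (U₀ : Set V) := by
      rw [mul_sum]; exact sum_le_sum fun v _ => hU _ (hM v)
    _ ≤ 2 * (∑ v, infDist v (U₀ : Set V) + ∑ v, dist (Mmap v) v) := by
      gcongr; exact sum_infDist_le_sum_infDist_add_sum_dist univ Mmap id U₀
    _ ≤ 2 * (α + 1) * ∑ v, infDist v (U₀ : Set V) := by
      simp only [dist_comm (Mmap _)]; linarith
  calc ∑ v, infDist v (A : Set V) ≤ ∑ v, infDist (Mmap v) A + ∑ v, dist v (Mmap v) :=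
        sum_infDist_le_sum_infDist_add_sum_dist univ id Mmap A
    _ ≤ β * (2 * (α + 1) * ∑ v, infDist v (U₀ : Set V)) + α * ∑ v, infDist v (U₀ : Set V) :=
        add_le_add ((hAapprox U hUC hUk).trans (by gcongr)) hcost
    _ = (α + 2 * β * (α + 1)) * ∑ v, infDist v (U₀ : Set V) := by ring

/-- An `α`-Coreset+ yields an `O(1)`-coreset: let `(V,d)` be a finite metric
space, `k > 0`, and `opt_k = min { Σ_v d(v,U) : U ⊆ V, |U| = k }`. Let
`C ⊆ V` with `|C| ≥ k` and `M : V → C` with `Σ_v d(v, M(v)) ≤ α·opt_k`.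
Give each `c ∈ C` the weight `w(c) = |{v : M(v) = c}|`. Then for every
`β ≥ 1` and every `A ⊆ C` with `|A| = k` such that
`Σ_{c∈C} w(c)·d(c,A) ≤ β · min { Σ_{c∈C} w(c)·d(c,U) : U ⊆ C, |U| = k }`,
it holds that `Σ_v d(v,A) ≤ (α + 2β(α+1)) · opt_k`. -/
theorem stmt14 {V : Type*} [MetricSpace V] [Fintype V] [DecidableEq V]
    (k : ℕ) (hk : 0 < k) (hkcard : k ≤ Fintype.card V)
    (C : Finset V) (hCk : k ≤ C.card)
    (Mmap : V → V) (hM : ∀ v, Mmap v ∈ C)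
    (α : ℝ) (hα : 0 ≤ α)
    (hcost : ∑ v : V, dist v (Mmap v) ≤
      α * sInf {x : ℝ | ∃ U : Finset V, U.card = k ∧
                  x = ∑ v : V, sInf (dist v '' ↑U)})
    (β : ℝ) (hβ : 1 ≤ β)
    (A : Finset V) (hA : A ⊆ C) (hAk : A.card = k)
    (hAapprox : ∀ U : Finset V, U ⊆ C → U.card = k →
      ∑ c ∈ C, ((Finset.univ.filter (fun v => Mmap v = c)).card : ℝ) *
          sInf (dist c '' ↑A) ≤
        β * ∑ c ∈ C, ((Finset.univ.filter (fun v => Mmap v = c)).card : ℝ) *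
          sInf (dist c '' ↑U)) :
    ∑ v : V, sInf (dist v '' ↑A) ≤
      (α + 2 * β * (α + 1)) *
        sInf {x : ℝ | ∃ U : Finset V, U.card = k ∧
              x = ∑ v : V, sInf (dist v '' ↑U)} :=
  stmt14_general k hk hkcard C hCk Mmap hM α hcost β hβ A hAapprox
end

section
/- Let (M,d) be a metric space, s ∈ M, α > 0, δ > 0, and let B be a nonempty finite subset of M with α ≤ d(s,v) ≤ 4α for every v ∈ B. Suppose B is partitioned into m̂ ≥ 1 parts P_1, …, P_{m̂}, each of diameter at most δα/10, and call a part heavy if it contains at least |B|/m̂² points. Let W ⊆ B be any subset that intersects every heavy part. Then W is nonempty and Σ_{v∈B} d(v,W) ≤ (δ/10)·α·|B| + 8α·|B|/m̂, where d(v,W) = min_{w∈W} d(v,w). -/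
/-- Cost bound for non-light buckets: let `(M,d)` be a metric space, `s ∈ M`,
`α, δ > 0`, and `B` a nonempty finite subset with `α ≤ d(s,v) ≤ 4α` for all
`v ∈ B`. Suppose `B` is partitioned into `m̂ ≥ 1` parts `P_1, …, P_{m̂}`,
each of diameter at most `δα/10`; call a part heavy if it contains at least
`|B|/m̂²` points. If `W ⊆ B` intersects every heavy part, then `W` is
nonempty and `Σ_{v∈B} d(v,W) ≤ (δ/10)·α·|B| + 8α·|B|/m̂`. -/
theorem stmt15 {M : Type*} [MetricSpace M] [DecidableEq M] (s : M)
    (α δ : ℝ) (hα : 0 < α) (hδ : 0 < δ)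
    (B : Finset M) (hB : B.Nonempty)
    (hdist : ∀ v ∈ B, α ≤ dist s v ∧ dist s v ≤ 4 * α)
    (mh : ℕ) (hmh : 1 ≤ mh) (P : Fin mh → Finset M)
    (hsub : ∀ i, P i ⊆ B)
    (hpart : ∀ v ∈ B, ∃! i : Fin mh, v ∈ P i)
    (hdiam : ∀ i, ∀ x ∈ P i, ∀ y ∈ P i, dist x y ≤ δ * α / 10)
    (W : Finset M) (hW : W ⊆ B)
    (hhit : ∀ i : Fin mh, (B.card : ℝ) / (mh : ℝ) ^ 2 ≤ ((P i).card : ℝ) →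
      ((P i) ∩ W).Nonempty) :
    W.Nonempty ∧
    ∑ v ∈ B, sInf (dist v '' ↑W) ≤
      δ / 10 * α * (B.card : ℝ) + 8 * α * (B.card : ℝ) / (mh : ℝ) := by
  classical
  have hBpos : 0 < (B.card : ℝ) := by exact_mod_cast Finset.card_pos.mpr hB
  have hmhpos : 0 < (mh : ℝ) := by exact_mod_cast hmh
  have hmh1 : (1 : ℝ) ≤ (mh : ℝ) := by exact_mod_cast hmh
  -- B is the disjoint union of the P i
  have hdisj : ∀ i j : Fin mh, i ≠ j → Disjoint (P i) (P j) := by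
    intro i j hij
    rw [Finset.disjoint_left]
    intro v hvi hvj
    obtain ⟨k, _, huniq⟩ := hpart v (hsub i hvi)
    exact hij ((huniq i hvi).trans (huniq j hvj).symm)
  have hBeq : B = Finset.univ.biUnion P := by
    ext v
    simp only [Finset.mem_biUnion, Finset.mem_univ, true_and]
    constructor
    · intro hv; obtain ⟨i, hi, _⟩ := hpart v hv; exact ⟨i, hi⟩
    · rintro ⟨i, hi⟩; exact hsub i hi
  have hcardsum : ∑ i, ((P i).card : ℝ) = (B.card : ℝ) := by
    rw [hBeq, Finset.card_biUnion (fun i _ j _ hij => hdisj i j hij)]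
    push_cast; ring
  -- existence of a heavy part
  have hheavy : ∃ i : Fin mh, (B.card : ℝ) / (mh : ℝ) ^ 2 ≤ ((P i).card : ℝ) := by
    by_contra h
    push_neg at h
    have hne : (Finset.univ : Finset (Fin mh)).Nonempty := by
      have : Nonempty (Fin mh) := ⟨⟨0, hmh⟩⟩
      exact Finset.univ_nonempty
    have hlt : ∑ i, ((P i).card : ℝ) < ∑ _i : Fin mh, (B.card : ℝ) / (mh : ℝ) ^ 2 :=
      Finset.sum_lt_sum_of_nonempty hne (fun i _ => h i)
    rw [hcardsum, Finset.sum_const, Finset.card_univ, Fintype.card_fin, nsmul_eq_mul] at hlt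
    have : (mh : ℝ) * ((B.card : ℝ) / (mh : ℝ) ^ 2) = (B.card : ℝ) / (mh : ℝ) := by
      field_simp
    rw [this] at hlt
    have : (B.card : ℝ) / (mh : ℝ) ≤ (B.card : ℝ) := by
      apply div_le_self hBpos.le hmh1
    linarith
  obtain ⟨i0, hi0⟩ := hheavy
  obtain ⟨w0, hw0⟩ := hhit i0 hi0
  have hWne : W.Nonempty := ⟨w0, (Finset.mem_inter.mp hw0).2⟩
  refine ⟨hWne, ?_⟩
  -- basic bounds on sInf
  have hbdd : ∀ v : M, BddBelow (dist v '' ↑W) := by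
    intro v
    exact ⟨0, fun x hx => by obtain ⟨w, _, rfl⟩ := hx; exact dist_nonneg⟩
  have hle : ∀ v : M, ∀ w ∈ W, sInf (dist v '' ↑W) ≤ dist v w := by
    intro v w hw
    exact csInf_le (hbdd v) ⟨w, by simpa using hw, rfl⟩
  have h8 : ∀ v ∈ B, sInf (dist v '' ↑W) ≤ 8 * α := by
    intro v hv
    obtain ⟨w, hw⟩ := hWne
    refine (hle v w hw).trans ?_
    calc dist v w ≤ dist v s + dist s w := dist_triangle _ _ _
    _ ≤ 4 * α + 4 * α := by
        rw [dist_comm v s]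
        exact add_le_add (hdist v hv).2 (hdist w (hW hw)).2
    _ = 8 * α := by ring
  -- light indices and light points
  set Lidx : Finset (Fin mh) :=
    Finset.univ.filter (fun i => ((P i).card : ℝ) < (B.card : ℝ) / (mh : ℝ) ^ 2) with hLidx
  set L : Finset M := Lidx.biUnion P with hL
  have hLsub : L ⊆ B := by
    intro v hv
    rw [hL, Finset.mem_biUnion] at hv
    obtain ⟨i, _, hi⟩ := hv
    exact hsub i hi
  have hLcard : (L.card : ℝ) ≤ (B.card : ℝ) / (mh : ℝ) := by
    have : L.card = ∑ i ∈ Lidx, (P i).card :=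
      Finset.card_biUnion (fun i _ j _ hij => hdisj i j hij)
    rw [this]
    push_cast
    calc ∑ i ∈ Lidx, ((P i).card : ℝ)
        ≤ ∑ _i ∈ Lidx, (B.card : ℝ) / (mh : ℝ) ^ 2 := by
          apply Finset.sum_le_sum
          intro i hi
          exact (Finset.mem_filter.mp hi).2.le
    _ = (Lidx.card : ℝ) * ((B.card : ℝ) / (mh : ℝ) ^ 2) := by
          rw [Finset.sum_const, nsmul_eq_mul]
    _ ≤ (mh : ℝ) * ((B.card : ℝ) / (mh : ℝ) ^ 2) := by
          apply mul_le_mul_of_nonneg_right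
          · exact_mod_cast (Finset.card_le_univ Lidx).trans_eq (Finset.card_univ.trans (Fintype.card_fin mh))
          · positivity
    _ = (B.card : ℝ) / (mh : ℝ) := by field_simp
  -- heavy points get cost δα/10
  have hheavypt : ∀ v ∈ B \ L, sInf (dist v '' ↑W) ≤ δ * α / 10 := by
    intro v hv
    rw [Finset.mem_sdiff] at hv
    obtain ⟨hvB, hvL⟩ := hv
    obtain ⟨i, hi, _⟩ := hpart v hvB
    have hiheavy : (B.card : ℝ) / (mh : ℝ) ^ 2 ≤ ((P i).card : ℝ) := by
      by_contra hlight
      push_neg at hlight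
      exact hvL (by
        rw [hL, Finset.mem_biUnion]
        exact ⟨i, Finset.mem_filter.mpr ⟨Finset.mem_univ i, hlight⟩, hi⟩)
    obtain ⟨w, hw⟩ := hhit i hiheavy
    rw [Finset.mem_inter] at hw
    exact (hle v w hw.2).trans (hdiam i v hi w hw.1)
  -- assemble
  have hsplit : ∑ v ∈ B \ L, sInf (dist v '' ↑W) + ∑ v ∈ L, sInf (dist v '' ↑W)
      = ∑ v ∈ B, sInf (dist v '' ↑W) := Finset.sum_sdiff hLsub
  have h1 : ∑ v ∈ B \ L, sInf (dist v '' ↑W) ≤ δ / 10 * α * (B.card : ℝ) := by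
    calc ∑ v ∈ B \ L, sInf (dist v '' ↑W) ≤ ∑ _v ∈ B \ L, δ * α / 10 :=
          Finset.sum_le_sum hheavypt
    _ = ((B \ L).card : ℝ) * (δ * α / 10) := by rw [Finset.sum_const, nsmul_eq_mul]
    _ ≤ (B.card : ℝ) * (δ * α / 10) := by
          apply mul_le_mul_of_nonneg_right _ (by positivity)
          exact_mod_cast Finset.card_le_card (Finset.sdiff_subset)
    _ = δ / 10 * α * (B.card : ℝ) := by ring
  have h2 : ∑ v ∈ L, sInf (dist v '' ↑W) ≤ 8 * α * (B.card : ℝ) / (mh : ℝ) := by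
    calc ∑ v ∈ L, sInf (dist v '' ↑W) ≤ ∑ _v ∈ L, 8 * α :=
          Finset.sum_le_sum (fun v hv => h8 v (hLsub hv))
    _ = (L.card : ℝ) * (8 * α) := by rw [Finset.sum_const, nsmul_eq_mul]
    _ ≤ ((B.card : ℝ) / (mh : ℝ)) * (8 * α) := by
          apply mul_le_mul_of_nonneg_right hLcard (by positivity)
    _ = 8 * α * (B.card : ℝ) / (mh : ℝ) := by ring
  linarith
end

section
/- Let (V,d) be a finite metric space with |V| = n ≥ 1, let C* ⊆ V be nonempty, and let opt = Σ_{v∈V} d(v, C*), where d(v,C*) = min_{c∈C*} d(v,c). Let M : V → V be a map, B ⊆ V a subset, and ψ : B → V an injective map. Suppose (i) d(b, M(b)) ≤ 4·d(ψ(b), C*) for every b ∈ B, and (ii) d(v, M(v)) ≤ max(opt/n, 4·d(v, C*)) for every v ∈ V \ B. Then Σ_{v∈V} d(v, M(v)) ≤ 9·opt. -/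
/-- Aggregation step of the `O(1)`-approximation guarantee: let `(V,d)` be a
finite metric space with `|V| = n ≥ 1`, `C* ⊆ V` nonempty and
`opt = Σ_v d(v,C*)`. Let `M : V → V`, `B ⊆ V`, and `ψ : B → V` injective.
If (i) `d(b, M(b)) ≤ 4·d(ψ(b), C*)` for all `b ∈ B`, and (ii)
`d(v, M(v)) ≤ max(opt/n, 4·d(v,C*))` for all `v ∈ V \ B`, then
`Σ_v d(v, M(v)) ≤ 9·opt`. -/
theorem stmt16 {V : Type*} [MetricSpace V] [Fintype V]
    (hn : 1 ≤ Fintype.card V)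
    (Cstar : Finset V) (hC : Cstar.Nonempty)
    (Mmap : V → V) (B : Finset V)
    (ψ : V → V) (hψ : Set.InjOn ψ ↑B)
    (h1 : ∀ b ∈ B, dist b (Mmap b) ≤ 4 * Cstar.inf' hC (dist (ψ b)))
    (h2 : ∀ v : V, v ∉ B → dist v (Mmap v) ≤
      max ((∑ u : V, Cstar.inf' hC (dist u)) / (Fintype.card V : ℝ))
        (4 * Cstar.inf' hC (dist v))) :
    ∑ v : V, dist v (Mmap v) ≤ 9 * ∑ u : V, Cstar.inf' hC (dist u) := by
  classical
  set f : V → ℝ := fun u => Cstar.inf' hC (dist u) with hf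
  have hfnn : ∀ u : V, 0 ≤ f u := by
    intro u
    exact Finset.le_inf' hC _ (fun c hc => dist_nonneg)
  set opt : ℝ := ∑ u : V, f u with hopt
  have hoptnn : 0 ≤ opt := Finset.sum_nonneg fun u _ => hfnn u
  set n : ℕ := Fintype.card V with hnn
  have hnpos : (0:ℝ) < n := by exact_mod_cast hn
  -- sum over B
  have hB : ∑ b ∈ B, dist b (Mmap b) ≤ 4 * opt := by
    calc ∑ b ∈ B, dist b (Mmap b) ≤ ∑ b ∈ B, 4 * f (ψ b) :=
          Finset.sum_le_sum fun b hb => h1 b hb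
      _ = 4 * ∑ b ∈ B, f (ψ b) := by rw [Finset.mul_sum]
      _ = 4 * ∑ u ∈ B.image ψ, f u := by
          rw [Finset.sum_image (fun a ha b hb => hψ ha hb)]
      _ ≤ 4 * opt := by
          refine mul_le_mul_of_nonneg_left ?_ (by norm_num)
          exact Finset.sum_le_sum_of_subset_of_nonneg (Finset.subset_univ _)
            (fun u _ _ => hfnn u)
  have hBc : ∑ v ∈ Bᶜ, dist v (Mmap v) ≤ 5 * opt := by
    have step : ∀ v ∈ Bᶜ, dist v (Mmap v) ≤ opt / n + 4 * f v := by
      intro v hv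
      have := h2 v (Finset.mem_compl.mp hv)
      refine le_trans this (max_le ?_ ?_)
      · have : 0 ≤ 4 * f v := by have := hfnn v; linarith
        linarith
      · have : 0 ≤ opt / n := by positivity
        linarith
    calc ∑ v ∈ Bᶜ, dist v (Mmap v) ≤ ∑ v ∈ Bᶜ, (opt / n + 4 * f v) :=
          Finset.sum_le_sum step
      _ = (Bᶜ.card : ℝ) * (opt / n) + 4 * ∑ v ∈ Bᶜ, f v := by
          rw [Finset.sum_add_distrib, Finset.sum_const, nsmul_eq_mul, Finset.mul_sum]
      _ ≤ (n : ℝ) * (opt / n) + 4 * opt := by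
          have ha : (Bᶜ.card : ℝ) ≤ n := by exact_mod_cast Finset.card_le_univ _
          have hb' : ∑ v ∈ Bᶜ, f v ≤ opt :=
            Finset.sum_le_sum_of_subset_of_nonneg (Finset.subset_univ _)
              (fun u _ _ => hfnn u)
          have hc' : (0:ℝ) ≤ opt / n := by positivity
          exact add_le_add (mul_le_mul_of_nonneg_right ha hc')
            (mul_le_mul_of_nonneg_left hb' (by norm_num))
      _ = opt + 4 * opt := by field_simp
      _ ≤ 5 * opt := by linarith
  have hsplit : ∑ v : V, dist v (Mmap v)
      = ∑ b ∈ B, dist b (Mmap b) + ∑ v ∈ Bᶜ, dist v (Mmap v) :=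
    (Finset.sum_add_sum_compl B _).symm
  linarith
end
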